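/- arXiv:2303.03861 — 13 statements merged into one kernel-verified Lean document; each statement's English description precedes it below -/
import Mathlib

section
/- Let X be a set, Y a nonempty subset of X, and S(Y) a subsemigroup of T(Y) that is a subgroup of Sym(Y). Then the semigroup T_{S(Y)}(X) = {f ∈ T(X) : f restricted/corestricted to Y lies in S(Y)} is a regular semigroup. -/
/-! If `f↾Y` has a right inverse `r` in `S`, then `f` has an inner inverse in `T_{S(Y)}(X)`:
take `r` on `Y` and any section of `f` on `range f \ Y`. Indeed `f (g (f x)) = f x` holds
for `f x ∈ Y` because `f↾Y ∘ r = id`, and otherwise because `g (f x)` is a preimage of `f x`. -/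

open Set Function

/-- `S` is a subsemigroup of the full transformation semigroup on `A`
(closed under composition; composition order is irrelevant here since we
quantify over all ordered pairs). -/
def IsSubsemigroupOn {A : Type*} (S : Set (A → A)) : Prop :=
  ∀ a ∈ S, ∀ b ∈ S, a ∘ b ∈ S

/-- `S` is a subgroup of `Sym(A)`. -/
def IsSubgroupOfSym {A : Type*} (S : Set (A → A)) : Prop :=
  IsSubsemigroupOn S ∧ (∀ a ∈ S, Function.Bijective a) ∧ (id ∈ S) ∧
    ∀ a ∈ S, ∃ b ∈ S, a ∘ b = id ∧ b ∘ a = id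

/-- `S` is a regular semigroup of transformations: every `a ∈ S` has `b ∈ S`
with `aba = a` (composed left to right, i.e. `x ↦ a (b (a x))`). -/
def IsRegularOn {A : Type*} (S : Set (A → A)) : Prop :=
  ∀ a ∈ S, ∃ b ∈ S, a ∘ b ∘ a = a

/-- `S` is an inverse semigroup of transformations. -/
def IsInverseOn {A : Type*} (S : Set (A → A)) : Prop :=
  ∀ a ∈ S, ∃! b, b ∈ S ∧ a ∘ b ∘ a = a ∧ b ∘ a ∘ b = b

/-- `u` is a unit of the transformation monoid `S`. -/
def IsUnitOn {A : Type*} (S : Set (A → A)) (u : A → A) : Prop :=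
  u ∈ S ∧ ∃ v ∈ S, u ∘ v = id ∧ v ∘ u = id

/-- `a` is a unit-regular element of `S`. -/
def UnitRegularElem {A : Type*} (S : Set (A → A)) (a : A → A) : Prop :=
  ∃ u, IsUnitOn S u ∧ a ∘ u ∘ a = a

/-- `S` is a unit-regular transformation monoid. -/
def IsUnitRegularOn {A : Type*} (S : Set (A → A)) : Prop :=
  ∀ a ∈ S, UnitRegularElem S a

/-- `T` is a transversal of `ker f`: it contains exactly one element of
each kernel class. -/
def IsTransversalOf {A : Type*} (f : A → A) (T : Set A) : Prop :=
  ∀ x : A, ∃! t, t ∈ T ∧ f t = f x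

/-- `T'` is a transversal of the kernel of the restriction of `f` to `Y`,
viewed inside the ambient set. -/
def IsTransversalOfOn {A : Type*} (f : A → A) (Y T' : Set A) : Prop :=
  T' ⊆ Y ∧ ∀ y ∈ Y, ∃! t, t ∈ T' ∧ f t = f y

/-- The semigroup `T_{S(Y)}(X)` of all transformations of `X` that leave `Y`
invariant and whose restriction-corestriction to `Y` lies in `S`. -/
def TSemi {X : Type*} (Y : Set X) (S : Set (Y → Y)) : Set (X → X) :=
  {f | ∃ h : MapsTo f Y Y, MapsTo.restrict f Y Y h ∈ S}

section Glue

variable {X : Type*} (f : X → X) (Y : Set X) (r : Y → Y)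

open Classical in
/-- The identity off `Y ∪ range f` is an arbitrary default, chosen because it needs no point
of `X`. -/
noncomputable def glueRightInverse : X → X := fun z =>
  if hz : z ∈ Y then r ⟨z, hz⟩ else if h : z ∈ range f then h.choose else z

theorem mapsTo_glueRightInverse : MapsTo (glueRightInverse f Y r) Y Y := fun z hz => by
  simp only [glueRightInverse, dif_pos hz]
  exact (r ⟨z, hz⟩).2

theorem restrict_glueRightInverse :
    (mapsTo_glueRightInverse f Y r).restrict = r := by
  funext y
  ext
  simp [MapsTo.restrict, Subtype.map, glueRightInverse]

theorem comp_glueRightInverse_comp (hf : MapsTo f Y Y) (hr : hf.restrict ∘ r = id) :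
    f ∘ glueRightInverse f Y r ∘ f = f := by
  funext x
  simp only [comp_apply, glueRightInverse]
  by_cases hx : f x ∈ Y
  · rw [dif_pos hx]
    exact congrArg Subtype.val (congrFun hr ⟨f x, hx⟩)
  · have hrange : f x ∈ range f := mem_range_self x
    rw [dif_neg hx, dif_pos hrange]
    exact hrange.choose_spec

end Glue

theorem isRegularOn_TSemi_of_forall_exists_comp_eq_id {X : Type*} {Y : Set X}
    {S : Set (Y → Y)} (hS : ∀ s ∈ S, ∃ r ∈ S, s ∘ r = id) : IsRegularOn (TSemi Y S) := by
  rintro f ⟨hf, hfS⟩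
  obtain ⟨r, hrS, hr⟩ := hS _ hfS
  refine ⟨glueRightInverse f Y r, ⟨mapsTo_glueRightInverse f Y r, ?_⟩,
    comp_glueRightInverse_comp f Y r hf hr⟩
  rwa [restrict_glueRightInverse]

theorem stmt1_general {X : Type*} (Y : Set X) (S : Set (Y → Y))
    (hgrp : IsSubgroupOfSym S) :
    IsRegularOn (TSemi Y S) :=
  isRegularOn_TSemi_of_forall_exists_comp_eq_id fun s hs =>
    (hgrp.2.2.2 s hs).imp fun _ ⟨hr, hsr, _⟩ => ⟨hr, hsr⟩

theorem stmt1 {X : Type*} (Y : Set X) (S : Set (Y → Y)) (hY : Y.Nonempty)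
    (hgrp : IsSubgroupOfSym S) :
    IsRegularOn (TSemi Y S) :=
  stmt1_general Y S hgrp
end

section
/- Let X be a set, Y a nonempty subset of X, and S(Y) a subsemigroup of T(Y). Then T_{S(Y)}(X) is a regular semigroup if and only if either (i) S(Y) is a subgroup of Sym(Y), or (ii) S(Y) is regular and Y = X. -/
open Set Function

/-!
Restriction to `Y` turns a relation `f g f = f` in `T_{S(Y)}(X)` into one in `S(Y)`, and every
`a ∈ S(Y)` extends to `X` arbitrarily off `Y`. If some `p ∉ Y` exists, extending `a` by a constant
`z ∈ Y` and evaluating `f g f = f` at `p` puts `z` in the image of `a`; so every element of `S(Y)`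
is surjective and regular, hence has a right inverse in `S(Y)`, and a semigroup in which every
element has a right inverse is a group. Conversely, a partner `g` of `f` is glued from a partner of
`f↾Y` on `Y` and a partner of `f` in `T(X)` off `Y`. At `x` with `f x ∈ Y` this needs
`f (g (f x)) = f x` from `f↾Y`, which (i) provides on all of `Y` and (ii) on the image of `f`.
-/

section

variable {X : Type*} {Y : Set X} {S : Set (Y → Y)}

lemma exists_comp_comp_eq_self (f : X → X) : ∃ e : X → X, f ∘ e ∘ f = f := by
  rcases isEmpty_or_nonempty X with hX | hX
  · exact ⟨f, funext fun x => isEmptyElim x⟩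
  · exact ⟨invFun f, funext fun x => invFun_eq ⟨x, rfl⟩⟩

lemma extend_val_apply_of_mem (b : Y → Y) (e : X → X) {x : X} (hx : x ∈ Y) :
    extend Subtype.val (Subtype.val ∘ b) e x = b ⟨x, hx⟩ :=
  Subtype.val_injective.extend_apply _ _ ⟨x, hx⟩

lemma extend_val_apply_of_notMem (b : Y → Y) (e : X → X) {x : X} (hx : x ∉ Y) :
    extend Subtype.val (Subtype.val ∘ b) e x = e x :=
  extend_apply' _ _ _ fun ⟨y, hy⟩ => hx (hy ▸ y.2)

lemma mapsTo_extend_val (b : Y → Y) (e : X → X) :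
    MapsTo (extend Subtype.val (Subtype.val ∘ b) e) Y Y := fun x hx => by
  rw [extend_val_apply_of_mem b e hx]
  exact (b _).2

lemma restrict_extend_val (b : Y → Y) (e : X → X) :
    (mapsTo_extend_val b e).restrict _ Y Y = b :=
  funext fun y => Subtype.ext (extend_val_apply_of_mem b e y.2)

lemma extend_val_mem_tSemi {b : Y → Y} (hb : b ∈ S) (e : X → X) :
    extend Subtype.val (Subtype.val ∘ b) e ∈ TSemi Y S :=
  ⟨mapsTo_extend_val b e, by rwa [restrict_extend_val]⟩

lemma restrict_comp_comp_eq_self {f g : X → X} (hf : MapsTo f Y Y) (hg : MapsTo g Y Y)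
    (hfgf : f ∘ g ∘ f = f) : hf.restrict f Y Y ∘ hg.restrict g Y Y ∘ hf.restrict f Y Y =
      hf.restrict f Y Y :=
  funext fun y => Subtype.ext (congrFun hfgf y)

lemma isRegularOn_of_isRegularOn_tSemi (hreg : IsRegularOn (TSemi Y S)) : IsRegularOn S := by
  intro a ha
  obtain ⟨g, ⟨hg, hgS⟩, hfgf⟩ := hreg _ (extend_val_mem_tSemi ha id)
  refine ⟨hg.restrict g Y Y, hgS, ?_⟩
  simpa only [restrict_extend_val] using
    restrict_comp_comp_eq_self (mapsTo_extend_val a id) hg hfgf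

lemma surjective_of_isRegularOn_tSemi (hreg : IsRegularOn (TSemi Y S)) {p : X} (hp : p ∉ Y)
    {a : Y → Y} (ha : a ∈ S) : Surjective a := by
  intro z
  set f := extend Subtype.val (Subtype.val ∘ a) fun _ => (z : X)
  obtain ⟨g, ⟨hg, -⟩, hfgf⟩ := hreg f (extend_val_mem_tSemi ha _)
  have hfp : f p = z := extend_val_apply_of_notMem a _ hp
  have hgz : g z ∈ Y := hg z.2
  refine ⟨⟨g z, hgz⟩, Subtype.ext ?_⟩
  calc (a ⟨g z, hgz⟩ : X) = f (g (f p)) := by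
        rw [hfp]; exact (extend_val_apply_of_mem a _ hgz).symm
    _ = z := by rw [← hfp]; exact congrFun hfgf p

lemma isSubgroupOfSym_of_forall_exists_rightInverse (hS : IsSubsemigroupOn S) (hSne : S.Nonempty)
    (hinv : ∀ a ∈ S, ∃ b ∈ S, a ∘ b = id) : IsSubgroupOfSym S := by
  have htwo : ∀ a ∈ S, ∃ b ∈ S, a ∘ b = id ∧ b ∘ a = id := by
    intro a ha
    obtain ⟨b, hb, hab⟩ := hinv a ha
    obtain ⟨c, -, hbc⟩ := hinv b hb
    have hca : c = a := by
      calc c = (a ∘ b) ∘ c := by rw [hab, id_comp]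
        _ = a := by rw [comp_assoc, hbc, comp_id]
    exact ⟨b, hb, hab, hca ▸ hbc⟩
  refine ⟨hS, fun a ha => ?_, ?_, htwo⟩
  · obtain ⟨b, -, hab, hba⟩ := htwo a ha
    exact ⟨LeftInverse.injective (g := b) (congrFun hba),
      RightInverse.surjective (g := b) (congrFun hab)⟩
  · obtain ⟨a, ha⟩ := hSne
    obtain ⟨b, hb, hab, -⟩ := htwo a ha
    exact hab ▸ hS a ha b hb

lemma exists_mem_tSemi_comp_comp_eq_self {f : X → X} {b : Y → Y} (hb : b ∈ S)
    (hfb : ∀ y : Y, (y : X) ∈ range f → f (b y) = y) :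
    ∃ g ∈ TSemi Y S, f ∘ g ∘ f = f := by
  obtain ⟨e, hfef⟩ := exists_comp_comp_eq_self f
  refine ⟨extend Subtype.val (Subtype.val ∘ b) e, extend_val_mem_tSemi hb e,
    funext fun x => ?_⟩
  change f (extend _ _ _ (f x)) = f x
  by_cases hx : f x ∈ Y
  · rw [extend_val_apply_of_mem b e hx]
    exact hfb ⟨f x, hx⟩ ⟨x, rfl⟩
  · rw [extend_val_apply_of_notMem b e hx]
    exact congrFun hfef x

end

theorem stmt2_general {X : Type*} (Y : Set X) (S : Set (Y → Y))
    (hSne : S.Nonempty) (hS : IsSubsemigroupOn S) :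
    IsRegularOn (TSemi Y S) ↔
      (IsSubgroupOfSym S ∨ (IsRegularOn S ∧ Y = Set.univ)) := by
  constructor
  · intro hreg
    have hSreg := isRegularOn_of_isRegularOn_tSemi hreg
    by_cases hY : Y = univ
    · exact .inr ⟨hSreg, hY⟩
    obtain ⟨p, hp⟩ := (ne_univ_iff_exists_notMem Y).1 hY
    refine .inl (isSubgroupOfSym_of_forall_exists_rightInverse hS hSne fun a ha => ?_)
    obtain ⟨b, hb, hab⟩ := hSreg a ha
    exact ⟨b, hb, (surjective_of_isRegularOn_tSemi hreg hp ha).injective_comp_right hab⟩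
  · rintro (⟨-, -, -, hinv⟩ | ⟨hSreg, rfl⟩) f ⟨hf, ha⟩
    · obtain ⟨b, hb, hab, -⟩ := hinv _ ha
      exact exists_mem_tSemi_comp_comp_eq_self hb fun y _ => congrArg Subtype.val (congrFun hab y)
    · obtain ⟨b, hb, hab⟩ := hSreg _ ha
      refine exists_mem_tSemi_comp_comp_eq_self hb ?_
      rintro y ⟨x, hxy⟩
      obtain rfl : y = hf.restrict f univ univ ⟨x, mem_univ x⟩ := Subtype.ext hxy.symm
      exact congrArg Subtype.val (congrFun hab ⟨x, mem_univ x⟩)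

theorem stmt2 {X : Type*} (Y : Set X) (S : Set (Y → Y)) (hY : Y.Nonempty)
    (hSne : S.Nonempty) (hS : IsSubsemigroupOn S) :
    IsRegularOn (TSemi Y S) ↔
      (IsSubgroupOfSym S ∨ (IsRegularOn S ∧ Y = Set.univ)) :=
  stmt2_general Y S hSne hS
end

section
/- Let X be a set, Y a nonempty subset of X, and S(Y) a subsemigroup of T(Y). Then T_{S(Y)}(X) is an inverse semigroup if and only if S(Y) is an inverse semigroup and either Y = X or |X| = 2. -/
open Set Function

/-!
Fix `s ∈ Y` and let `r : X → Y` be the retraction collapsing `X \ Y` to `s`. The maps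
`a ↦ val ∘ a ∘ r` and `f ↦ r ∘ f ∘ val` respect composition (the latter on maps preserving `Y`)
and the second undoes the first, so the inverse property passes from `T_{S(Y)}(X)` to `S(Y)`,
and back when `Y = X`, where the two maps are mutually inverse.

If `p ∉ Y` and `a, b` are mutually inverse in `S(Y)`, then extending `a` by the constant `a t`
off `Y` gives an inverse of the extension of `b` for every `t ∈ Y`; uniqueness, evaluated at
`p`, forces `a` to be constant, say with value `u`. Then every map equal to `u` on `Y` lies in
`T_{S(Y)}(X)`, and the one sending `p` to a third point `w` and everything else to `u` has no
inverse when `w ∈ Y` and two distinct ones when `w ∉ Y`. Conversely, if `X = {p, y}` with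
`Y = {y}`, the elements of `T_{S(Y)}(X)` fix `y`, hence are commuting idempotents.
-/

section Transfer

variable {A B : Type*}

theorem isInverseOn_of_idempotent_of_commute {T : Set (A → A)} (hidem : ∀ f ∈ T, f ∘ f = f)
    (hcomm : ∀ f ∈ T, ∀ g ∈ T, f ∘ g = g ∘ f) : IsInverseOn T := by
  intro f hf
  have hfff : f ∘ f ∘ f = f := by rw [hidem f hf, hidem f hf]
  refine ⟨f, ⟨hf, hfff, hfff⟩, ?_⟩
  rintro g ⟨hg, hfgf, hgfg⟩
  calc g = g ∘ f ∘ g := hgfg.symm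
    _ = f ∘ g ∘ g := by rw [← comp_assoc, hcomm g hg f hf, comp_assoc]
    _ = f ∘ f ∘ g := by rw [hidem g hg, ← comp_assoc, hidem f hf]
    _ = f ∘ g ∘ f := by rw [hcomm g hg f hf]
    _ = f := hfgf

theorem IsInverseOn.of_retract {S : Set (A → A)} {T : Set (B → B)} (φ : (A → A) → (B → B))
    (ψ : (B → B) → (A → A)) (hφ : MapsTo φ S T) (hψ : MapsTo ψ T S)
    (hψφ : ∀ a ∈ S, ψ (φ a) = a)
    (hφ₃ : ∀ a ∈ S, ∀ b ∈ S, ∀ c ∈ S, φ (a ∘ b ∘ c) = φ a ∘ φ b ∘ φ c)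
    (hψ₃ : ∀ f ∈ T, ∀ g ∈ T, ∀ h ∈ T, ψ (f ∘ g ∘ h) = ψ f ∘ ψ g ∘ ψ h)
    (hT : IsInverseOn T) : IsInverseOn S := by
  intro a ha
  obtain ⟨g, ⟨hg, hφagφa, hgφag⟩, huniq⟩ := hT (φ a) (hφ ha)
  refine ⟨ψ g, ⟨hψ hg, ?_, ?_⟩, ?_⟩
  · calc a ∘ ψ g ∘ a = ψ (φ a) ∘ ψ g ∘ ψ (φ a) := by rw [hψφ a ha]
      _ = a := by rw [← hψ₃ _ (hφ ha) _ hg _ (hφ ha), hφagφa, hψφ a ha]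
  · rw [← hψφ a ha, ← hψ₃ _ hg _ (hφ ha) _ hg, hgφag]
  · rintro b ⟨hb, haba, hbab⟩
    have hφb : φ b = g := huniq (φ b)
      ⟨hφ hb, by rw [← hφ₃ a ha b hb a ha, haba], by rw [← hφ₃ b hb a ha b hb, hbab]⟩
    rw [← hψφ b hb, hφb]

end Transfer

namespace TSemi

variable {X : Type*} {Y : Set X} {S : Set (Y → Y)}

open Classical in
noncomputable def retraction (s : Y) (x : X) : Y :=
  if h : x ∈ Y then ⟨x, h⟩ else s

noncomputable def extendAt (s : Y) (a : Y → Y) : X → X :=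
  Subtype.val ∘ a ∘ retraction s

noncomputable def compress (s : Y) (f : X → X) : Y → Y :=
  retraction s ∘ f ∘ Subtype.val

theorem retraction_comp_val (s : Y) : retraction s ∘ Subtype.val = id := by
  funext y
  simp [retraction]

theorem val_retraction_of_mem (s : Y) {x : X} (hx : x ∈ Y) : (retraction s x : X) = x := by
  simp [retraction, hx]

theorem retraction_of_notMem (s : Y) {x : X} (hx : x ∉ Y) : retraction s x = s := by
  simp [retraction, hx]

theorem extendAt_apply_of_notMem (s : Y) (a : Y → Y) {x : X} (hx : x ∉ Y) :
    extendAt s a x = a s := by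
  simp [extendAt, retraction_of_notMem s hx]

theorem extendAt_comp_extendAt (s t : Y) (a b : Y → Y) :
    extendAt s a ∘ extendAt t b = extendAt t (a ∘ b) := by
  change Subtype.val ∘ a ∘ (retraction s ∘ Subtype.val) ∘ b ∘ retraction t = _
  rw [retraction_comp_val]
  rfl

theorem extendAt_comp_comp (r s t : Y) (a b c : Y → Y) :
    extendAt r a ∘ extendAt s b ∘ extendAt t c = extendAt t (a ∘ b ∘ c) := by
  rw [extendAt_comp_extendAt, extendAt_comp_extendAt]

theorem compress_extendAt (s t : Y) (a : Y → Y) : compress s (extendAt t a) = a := by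
  change (retraction s ∘ Subtype.val) ∘ a ∘ retraction t ∘ Subtype.val = a
  rw [retraction_comp_val, retraction_comp_val]
  rfl

theorem compress_comp (s : Y) (f : X → X) {g : X → X} (hg : MapsTo g Y Y) :
    compress s (f ∘ g) = compress s f ∘ compress s g := by
  funext y
  simp [compress, val_retraction_of_mem s (hg y.2)]

theorem compress_comp_comp (s : Y) (f : X → X) {g h : X → X} (hg : MapsTo g Y Y)
    (hh : MapsTo h Y Y) : compress s (f ∘ g ∘ h) = compress s f ∘ compress s g ∘ compress s h := by
  rw [compress_comp s f (hg.comp hh), compress_comp s g hh]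

theorem extendAt_compress_of_eq_univ (hY : Y = univ) (s : Y) (f : X → X) :
    extendAt s (compress s f) = f := by
  subst hY
  funext x
  simp [extendAt, compress, retraction]

theorem restrict_eq_compress (s : Y) {f : X → X} (hf : MapsTo f Y Y) :
    hf.restrict f Y Y = compress s f := by
  funext y
  exact Subtype.ext (val_retraction_of_mem s (hf y.2)).symm

theorem mapsTo_extendAt (s : Y) (a : Y → Y) : MapsTo (extendAt s a) Y Y :=
  fun _ _ => Subtype.prop _

theorem extendAt_mem (s : Y) {a : Y → Y} (ha : a ∈ S) : extendAt s a ∈ TSemi Y S :=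
  ⟨mapsTo_extendAt s a, by rwa [restrict_eq_compress s, compress_extendAt]⟩

theorem compress_mem (s : Y) {f : X → X} (hf : f ∈ TSemi Y S) : compress s f ∈ S := by
  obtain ⟨hmaps, hS⟩ := hf
  rwa [restrict_eq_compress s] at hS

theorem isInverseOn_of_isInverseOn_TSemi (s : Y) (hT : IsInverseOn (TSemi Y S)) : IsInverseOn S :=
  IsInverseOn.of_retract (extendAt s) (compress s) (fun _ => extendAt_mem s)
    (fun _ => compress_mem s) (fun a _ => compress_extendAt s s a)
    (fun a _ b _ c _ => (extendAt_comp_comp s s s a b c).symm)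
    (fun f _ _ hg _ hh => compress_comp_comp s f hg.1 hh.1) hT

theorem isInverseOn_of_eq_univ (hY : Y = univ) (s : Y) (hS : IsInverseOn S) :
    IsInverseOn (TSemi Y S) :=
  IsInverseOn.of_retract (compress s) (extendAt s) (fun _ => compress_mem s)
    (fun _ => extendAt_mem s) (fun f _ => extendAt_compress_of_eq_univ hY s f)
    (fun f _ _ hg _ hh => compress_comp_comp s f hg.1 hh.1)
    (fun a _ b _ c _ => (extendAt_comp_comp s s s a b c).symm) hS

theorem apply_eq_apply_of_isInverseOn (hT : IsInverseOn (TSemi Y S)) {p : X} (hp : p ∉ Y)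
    {a : Y → Y} (ha : a ∈ S) (s t : Y) : a s = a t := by
  obtain ⟨b, ⟨hb, haba, hbab⟩, -⟩ := isInverseOn_of_isInverseOn_TSemi s hT a ha
  have hinv : ∀ r, extendAt s b ∘ extendAt r a ∘ extendAt s b = extendAt s b ∧
      extendAt r a ∘ extendAt s b ∘ extendAt r a = extendAt r a := fun r => by
    rw [extendAt_comp_comp, extendAt_comp_comp, hbab, haba]
    exact ⟨rfl, rfl⟩
  have hst : extendAt s a = extendAt t a :=
    (hT _ (extendAt_mem s hb)).unique ⟨extendAt_mem s ha, hinv s⟩ ⟨extendAt_mem t ha, hinv t⟩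
  have hp' := congrFun hst p
  rw [extendAt_apply_of_notMem s a hp, extendAt_apply_of_notMem t a hp] at hp'
  exact Subtype.val_injective hp'

theorem eq_of_mem_of_isInverseOn {p u : X} (hT : IsInverseOn (TSemi Y S)) (hp : p ∉ Y)
    (hC : ∀ f : X → X, (∀ y ∈ Y, f y = u) → f ∈ TSemi Y S) {w : X} (hw : w ∈ Y) : w = u := by
  classical
  let f : X → X := fun x => if x = p then w else u
  obtain ⟨g, ⟨hg, hfgf, -⟩, -⟩ := hT f (hC f fun y hy => if_neg (ne_of_mem_of_not_mem hy hp))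
  have hgw : g w ≠ p := ne_of_mem_of_not_mem (hg.1 hw) hp
  have := congrFun hfgf p
  simp [f, hgw] at this
  exact this.symm

theorem eq_of_notMem_of_isInverseOn {p u : X} (hT : IsInverseOn (TSemi Y S)) (hp : p ∉ Y)
    (hC : ∀ f : X → X, (∀ y ∈ Y, f y = u) → f ∈ TSemi Y S) (hu : u ∈ Y) {w : X} (hw : w ∉ Y)
    (hwp : w ≠ p) : w = u := by
  classical
  by_contra hwu
  have hup : u ≠ p := ne_of_mem_of_not_mem hu hp
  let f : X → X := fun x => if x = p then w else u
  let g₁ : X → X := fun x => if x = w then p else u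
  let g₂ : X → X := fun x => if x ∈ Y then u else p
  have hf : f ∈ TSemi Y S := hC f fun y hy => if_neg (ne_of_mem_of_not_mem hy hp)
  have hg₁ : g₁ ∈ TSemi Y S := hC g₁ fun y hy => if_neg (ne_of_mem_of_not_mem hy hw)
  have hg₂ : g₂ ∈ TSemi Y S := hC g₂ fun y hy => if_pos hy
  have h₁₂ : g₁ = g₂ := (hT f hf).unique
    ⟨hg₁, by funext x; by_cases x = p <;> simp_all [f, g₁],
      by funext x; by_cases x = w <;> simp_all [f, g₁, Ne.symm hwu]⟩
    ⟨hg₂, by funext x; by_cases x = p <;> simp_all [f, g₂],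
      by funext x; by_cases x ∈ Y <;> simp_all [f, g₂]⟩
  have := congrFun h₁₂ p
  simp [g₁, g₂, hwp.symm, hp] at this
  exact hup this

theorem card_eq_two_of_isInverseOn (hT : IsInverseOn (TSemi Y S)) {p y : X} (hp : p ∉ Y)
    (hy : y ∈ Y) (hS : S.Nonempty) : Nat.card X = 2 := by
  obtain ⟨a, ha⟩ := hS
  set u : X := ↑(a ⟨y, hy⟩)
  have hu : u ∈ Y := Subtype.prop _
  have hC : ∀ f : X → X, (∀ y ∈ Y, f y = u) → f ∈ TSemi Y S := fun f hf => by
    have hmaps : MapsTo f Y Y := fun x hx => hf x hx ▸ hu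
    refine ⟨hmaps, ?_⟩
    convert ha using 1
    funext t
    exact Subtype.ext ((hf t t.2).trans
      (congrArg Subtype.val (apply_eq_apply_of_isInverseOn hT hp ha ⟨y, hy⟩ t)))
  refine (Nat.card_eq_two_iff' p).2 ⟨u, ne_of_mem_of_not_mem hu hp, fun w hwp => ?_⟩
  by_cases hw : w ∈ Y
  · exact eq_of_mem_of_isInverseOn hT hp hC hw
  · exact eq_of_notMem_of_isInverseOn hT hp hC hu hw hwp

theorem isInverseOn_of_card_eq_two (hX : Nat.card X = 2) {p y : X} (hp : p ∉ Y) (hy : y ∈ Y) :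
    IsInverseOn (TSemi Y S) := by
  obtain ⟨z, -, hz⟩ := (Nat.card_eq_two_iff' p).1 hX
  have hpy : ∀ x, x = p ∨ x = y := fun x =>
    or_iff_not_imp_left.2 fun hx => (hz x hx).trans (hz y (ne_of_mem_of_not_mem hy hp)).symm
  have hfix : ∀ f ∈ TSemi Y S, f y = y := fun f hf =>
    (hpy _).resolve_left (ne_of_mem_of_not_mem (hf.1 hy) hp)
  refine isInverseOn_of_idempotent_of_commute (fun f hf => ?_) (fun f hf g hg => ?_)
  · funext x
    rcases hpy x with rfl | rfl <;> rcases hpy (f x) with h | h <;> simp_all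
  · funext x
    rcases hpy x with rfl | rfl <;> rcases hpy (f x) with h | h <;>
      rcases hpy (g x) with h' | h' <;> simp_all

end TSemi

theorem stmt3_general {X : Type*} (Y : Set X) (S : Set (Y → Y)) (hY : Y.Nonempty)
    (hSne : S.Nonempty) :
    IsInverseOn (TSemi Y S) ↔
      (IsInverseOn S ∧ (Y = Set.univ ∨ Nat.card X = 2)) := by
  obtain ⟨y, hy⟩ := hY
  constructor
  · intro hT
    refine ⟨TSemi.isInverseOn_of_isInverseOn_TSemi ⟨y, hy⟩ hT, or_iff_not_imp_left.2 fun hYu => ?_⟩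
    obtain ⟨p, hp⟩ := (ne_univ_iff_exists_notMem Y).1 hYu
    exact TSemi.card_eq_two_of_isInverseOn hT hp hy hSne
  · rintro ⟨hS, hYX⟩
    by_cases hYu : Y = univ
    · exact TSemi.isInverseOn_of_eq_univ hYu ⟨y, hy⟩ hS
    · obtain ⟨p, hp⟩ := (ne_univ_iff_exists_notMem Y).1 hYu
      exact TSemi.isInverseOn_of_card_eq_two (hYX.resolve_left hYu) hp hy

theorem stmt3 {X : Type*} (Y : Set X) (S : Set (Y → Y)) (hY : Y.Nonempty)
    (hSne : S.Nonempty) (hS : IsSubsemigroupOn S) :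
    IsInverseOn (TSemi Y S) ↔
      (IsInverseOn S ∧ (Y = Set.univ ∨ Nat.card X = 2)) :=
  stmt3_general Y S hY hSne
end

section
/- Let X be a set, Y a nonempty subset of X, and S(Y) a subsemigroup of T(Y) containing I_Y. Let f ∈ T_{S(Y)}(X). Then f is unit-regular in T_{S(Y)}(X) if and only if (i) f↾Y is unit-regular in S(Y), (ii) R(f) ∩ Y = R(f↾Y), and (iii) |C(f) \ C(f↾Y)| = |D(f) \ D(f↾Y)|, where C(f) = X \ T_f and C(f↾Y) = Y \ T_{f↾Y} for some transversals T_f of ker(f) and T_{f↾Y} of ker(f↾Y) with Y ∩ T_f = T_{f↾Y}, and D(f) = X \ R(f), D(f↾Y) = Y \ R(f↾Y). -/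
open Set Function

/-!
Once `Y ∩ T_f = T_{f↾Y}`, the set `C(f) \ C(f↾Y)` is `X \ (T_f ∪ Y)`, and likewise
`D(f) \ D(f↾Y) = X \ (R(f) ∪ Y)`.

If `f u f = f` for a unit `u` of `T_{S(Y)}(X)`, then `u↾Y` is a unit of `S(Y)` witnessing (i),
every `f x ∈ Y` equals `f (u (f x))` with `u (f x) ∈ Y`, giving (ii), and `T_f = u(R(f))` is a
transversal of `ker f` whose trace on `Y` is one of `ker f↾Y`; the bijection `u` maps
`X \ (R(f) ∪ Y)` onto `X \ (T_f ∪ Y)`, giving (iii).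

Conversely, let `u₀` be a unit of `S(Y)` with inverse `v₀` and `f↾Y u₀ f↾Y = f↾Y`. By (ii) and
the compatibility of the transversals, `f` is a bijection from `T_f \ Y` onto `R(f) \ Y`.
Gluing `v₀` on `Y`, `f` on `T_f \ Y` and a bijection `X \ (T_f ∪ Y) → X \ (R(f) ∪ Y)` provided
by (iii) gives a permutation `σ` of `X`, and `u = σ⁻¹` is a unit of `T_{S(Y)}(X)` with
`f u f = f`.
-/

open Cardinal

theorem compl_diff_diff_of_subset {α : Type*} {R U V : Set α} (h : V ⊆ R) :
    Rᶜ \ (U \ V) = (U ∪ R)ᶜ := by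
  ext x
  simp only [mem_sdiff, mem_compl_iff, mem_union, not_and, not_not, not_or]
  exact ⟨fun ⟨hR, hU⟩ => ⟨fun hx => hR (h (hU hx)), hR⟩,
    fun ⟨hU, hR⟩ => ⟨hR, fun hx => absurd hx hU⟩⟩

theorem Set.BijOn.union_of_disjoint {α β : Type*} {f : α → β} {s₁ s₂ : Set α} {t₁ t₂ : Set β}
    (h₁ : BijOn f s₁ t₁) (h₂ : BijOn f s₂ t₂) (ht : Disjoint t₁ t₂) :
    BijOn f (s₁ ∪ s₂) (t₁ ∪ t₂) := by
  refine h₁.union h₂ ?_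
  rintro x (hx | hx) y (hy | hy) hxy
  · exact h₁.injOn hx hy hxy
  · exact (ht.ne_of_mem (h₁.mapsTo hx) (h₂.mapsTo hy) hxy).elim
  · exact (ht.ne_of_mem (h₁.mapsTo hy) (h₂.mapsTo hx) hxy.symm).elim
  · exact h₂.injOn hx hy hxy

theorem exists_perm_eqOn_of_bijOn {α : Type*} {s t : Set α} {g : α → α} (h : BijOn g s t)
    (hc : #↥sᶜ = #↥tᶜ) : ∃ σ : Equiv.Perm α, EqOn σ g s := by
  classical
  obtain ⟨e⟩ := Cardinal.eq.mp hc
  refine ⟨Equiv.subtypeCongr (p := (· ∈ s)) (h.equiv g) e, fun x hx => ?_⟩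
  simp [Equiv.subtypeCongr, Equiv.sumCompl_symm_apply_of_pos hx, BijOn.equiv]

theorem exists_perm_extend {α : Type*} {A s t : Set α} {e : A → A} (he : Bijective e)
    {g : α → α} (hg : BijOn g s t) (hs : Disjoint A s) (ht : Disjoint A t)
    (hc : #↥(A ∪ s)ᶜ = #↥(A ∪ t)ᶜ) :
    ∃ σ : Equiv.Perm α, (∀ a : A, σ a = e a) ∧ EqOn σ g s := by
  classical
  set g' : α → α := fun x => if hx : x ∈ A then e ⟨x, hx⟩ else g x with hg'
  have hA : BijOn g' A A := by
    refine ⟨fun x hx => by simp [hg', hx], fun x hx y hy hxy => ?_, fun y hy => ?_⟩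
    · simp only [hg', hx, hy, dite_true] at hxy
      exact congrArg Subtype.val (he.1 (Subtype.ext hxy))
    · obtain ⟨x, hx⟩ := he.2 ⟨y, hy⟩
      exact ⟨x, x.2, by simp [hg', hx]⟩
  have hs' : BijOn g' s t := hg.congr fun x hx => by simp [hg', hs.notMem_of_mem_right hx]
  obtain ⟨σ, hσ⟩ := exists_perm_eqOn_of_bijOn (hA.union_of_disjoint hs' ht) hc
  refine ⟨σ, fun a => ?_, fun x hx => ?_⟩
  · simp [hσ (Or.inl a.2), hg']
  · simp [hσ (Or.inr hx), hg', hs.notMem_of_mem_right hx]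

theorem Cardinal.mk_compl_union_image_eq {α : Type*} {u : α → α} (hu : Bijective u) {A : Set α}
    (hA : u '' A = A) (B : Set α) : #↥(A ∪ u '' B)ᶜ = #↥(A ∪ B)ᶜ := by
  rw [← Cardinal.mk_image_eq hu.injective (s := (A ∪ B)ᶜ), image_compl_eq hu, image_union, hA]

section Transversal

variable {A : Type*} {f : A → A} {T : Set A}

theorem IsTransversalOf.injOn (h : IsTransversalOf f T) : InjOn f T :=
  fun _ hx y hy hxy => (h y).unique ⟨hx, hxy⟩ ⟨hy, rfl⟩

theorem isTransversalOf_range_comp {u : A → A} (h : f ∘ u ∘ f = f) :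
    IsTransversalOf f (range (u ∘ f)) := by
  intro x
  refine ⟨u (f x), ⟨⟨x, rfl⟩, congrFun h x⟩, ?_⟩
  rintro _ ⟨⟨y, rfl⟩, hy⟩
  rw [comp_apply, ← (congrFun h y).symm.trans hy]

theorem IsTransversalOf.isTransversalOfOn_inter (h : IsTransversalOf f T) {Y : Set A}
    (hY : ∀ y ∈ Y, ∃ t ∈ Y ∩ T, f t = f y) : IsTransversalOfOn f Y (Y ∩ T) := by
  refine ⟨inter_subset_left, fun y hy => ?_⟩
  obtain ⟨t, ht, hft⟩ := hY y hy
  exact ⟨t, ⟨ht, hft⟩, fun s hs => h.injOn hs.1.2 ht.2 (hs.2.trans hft.symm)⟩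

theorem IsTransversalOf.bijOn_diff (h : IsTransversalOf f T) {Y : Set A}
    (hT' : IsTransversalOfOn f Y (Y ∩ T)) (hm : MapsTo f Y Y) (hrange : range f ∩ Y = f '' Y) :
    BijOn f (T \ Y) (range f \ Y) := by
  refine ⟨fun t ht => ⟨mem_range_self t, fun hftY => ht.2 ?_⟩, h.injOn.mono sdiff_subset, ?_⟩
  · obtain ⟨y, hy, hyt⟩ : f t ∈ f '' Y := hrange ▸ ⟨mem_range_self t, hftY⟩
    obtain ⟨s, ⟨⟨hsY, hsT⟩, hfs⟩, -⟩ := hT'.2 y hy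
    rwa [← h.injOn hsT ht.1 (hfs.trans hyt)]
  · rintro _ ⟨⟨x, rfl⟩, hx⟩
    obtain ⟨t, ⟨ht, hft⟩, -⟩ := h x
    exact ⟨t, ⟨ht, fun htY => hx (hft ▸ hm htY)⟩, hft⟩

end Transversal

theorem IsUnitOn.bijective {A : Type*} {S : Set (A → A)} {u : A → A} (h : IsUnitOn S u) :
    Bijective u :=
  let ⟨_, _, _, huv, hvu⟩ := h
  ⟨LeftInverse.injective (congrFun hvu), RightInverse.surjective (congrFun huv)⟩

section TSemi

variable {X : Type*} {Y : Set X} {S : Set (Y → Y)} {f : X → X}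

theorem exists_mapsTo_restrict_eq {g : X → X} {w : Y → Y} (h : ∀ y : Y, g y = w y) :
    ∃ hg : MapsTo g Y Y, hg.restrict g Y Y = w :=
  ⟨fun y hy => h ⟨y, hy⟩ ▸ (w _).2, funext fun y => Subtype.ext (h y)⟩

theorem isUnitOn_tSemi_iff {u : X → X} :
    IsUnitOn (TSemi Y S) u ↔
      Bijective u ∧ ∃ hu : MapsTo u Y Y, IsUnitOn S (hu.restrict u Y Y) := by
  constructor
  · intro hunit
    obtain ⟨⟨hu, huS⟩, v, ⟨hv, hvS⟩, huv, hvu⟩ := id hunit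
    exact ⟨hunit.bijective, hu, huS, hv.restrict v Y Y, hvS,
      funext fun y => Subtype.ext (congrFun huv y), funext fun y => Subtype.ext (congrFun hvu y)⟩
  · rintro ⟨hbij, hu, huS, v₀, hv₀S, huv₀, hvu₀⟩
    set e := Equiv.ofBijective u hbij
    have hv : ∀ y : Y, e.symm y = v₀ y := fun y =>
      e.symm_apply_eq.2 (congrArg Subtype.val (congrFun huv₀ y)).symm
    obtain ⟨hvY, rfl⟩ := exists_mapsTo_restrict_eq hv
    exact ⟨⟨hu, huS⟩, e.symm, ⟨hvY, hv₀S⟩, e.self_comp_symm, e.symm_comp_self⟩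

theorem unitRegularElem_restrict_of_tSemi (hm : MapsTo f Y Y)
    (h : UnitRegularElem (TSemi Y S) f) : UnitRegularElem S (hm.restrict f Y Y) := by
  obtain ⟨u, hunit, hfuf⟩ := h
  obtain ⟨-, hu, hu₀⟩ := isUnitOn_tSemi_iff.1 hunit
  exact ⟨hu.restrict u Y Y, hu₀, funext fun y => Subtype.ext (congrFun hfuf y)⟩

theorem range_inter_eq_image_of_unitRegularElem_tSemi (hm : MapsTo f Y Y)
    (h : UnitRegularElem (TSemi Y S) f) : range f ∩ Y = f '' Y := by
  obtain ⟨u, hunit, hfuf⟩ := h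
  obtain ⟨-, hu, -⟩ := isUnitOn_tSemi_iff.1 hunit
  refine Subset.antisymm ?_ (subset_inter (image_subset_range f Y) hm.image_subset)
  rintro _ ⟨⟨x, rfl⟩, hx⟩
  exact ⟨u (f x), hu hx, congrFun hfuf x⟩

theorem exists_transversal_of_unitRegularElem_tSemi (hm : MapsTo f Y Y)
    (h : UnitRegularElem (TSemi Y S) f) :
    ∃ T, IsTransversalOf f T ∧ IsTransversalOfOn f Y (Y ∩ T) ∧
      #↥(Y ∪ T)ᶜ = #↥(Y ∪ range f)ᶜ := by
  obtain ⟨u, hunit, hfuf⟩ := h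
  obtain ⟨hbij, hu, hu₀⟩ := isUnitOn_tSemi_iff.1 hunit
  have hT := isTransversalOf_range_comp hfuf
  refine ⟨range (u ∘ f), hT,
    hT.isTransversalOfOn_inter fun y hy => ⟨u (f y), ⟨hu (hm hy), y, rfl⟩, congrFun hfuf y⟩, ?_⟩
  have huY : u '' Y = Y := ((hu.restrict_surjective_iff).1 hu₀.bijective.2).image_eq_of_mapsTo hu
  rw [range_comp]
  exact Cardinal.mk_compl_union_image_eq hbij huY _

theorem unitRegularElem_tSemi_of_transversal (hm : MapsTo f Y Y)
    (hunit : UnitRegularElem S (hm.restrict f Y Y)) (hrange : range f ∩ Y = f '' Y) {T : Set X}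
    (hT : IsTransversalOf f T) (hT' : IsTransversalOfOn f Y (Y ∩ T))
    (hc : #↥(Y ∪ T)ᶜ = #↥(Y ∪ range f)ᶜ) : UnitRegularElem (TSemi Y S) f := by
  obtain ⟨u₀, hu₀, hfuf₀⟩ := hunit
  obtain ⟨hu₀S, v₀, hv₀S, huv₀, hvu₀⟩ := id hu₀
  have hbij := hT.bijOn_diff hT' hm hrange
  obtain ⟨σ, hσY, hσf⟩ := exists_perm_extend (IsUnitOn.bijective ⟨hv₀S, u₀, hu₀S, hvu₀, huv₀⟩)
    hbij disjoint_sdiff_right disjoint_sdiff_right (by rwa [union_sdiff_self, union_sdiff_self])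
  have hσu : ∀ y (hy : y ∈ Y), σ.symm y = u₀ ⟨y, hy⟩ := fun y hy =>
    σ.symm_apply_eq.2 (by rw [hσY]; exact congrArg Subtype.val (congrFun hvu₀ ⟨y, hy⟩).symm)
  obtain ⟨hσmaps, hσres⟩ := exists_mapsTo_restrict_eq fun y : Y => hσu y y.2
  refine ⟨σ.symm, isUnitOn_tSemi_iff.2 ⟨σ.symm.bijective, hσmaps, hσres ▸ hu₀⟩, funext fun x => ?_⟩
  by_cases hx : f x ∈ Y
  · obtain ⟨y, hy, hyx⟩ : f x ∈ f '' Y := hrange ▸ ⟨mem_range_self x, hx⟩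
    have hfx : (⟨f x, hx⟩ : Y) = hm.restrict f Y Y ⟨y, hy⟩ := Subtype.ext hyx.symm
    rw [comp_apply, comp_apply, hσu _ hx, hfx]
    exact (congrArg Subtype.val (congrFun hfuf₀ ⟨y, hy⟩)).trans hyx
  · obtain ⟨t, ht, hft⟩ := hbij.surjOn ⟨mem_range_self x, hx⟩
    rw [comp_apply, comp_apply, ← hft, ← hσf ht, σ.symm_apply_apply, hσf ht]

end TSemi

theorem stmt5_general {X : Type*} (Y : Set X) (S : Set (Y → Y))
    (f : X → X) (hm : MapsTo f Y Y) :
    UnitRegularElem (TSemi Y S) f ↔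
      (UnitRegularElem S (MapsTo.restrict f Y Y hm) ∧
       Set.range f ∩ Y = f '' Y ∧
       ∃ Tf T' : Set X, IsTransversalOf f Tf ∧ IsTransversalOfOn f Y T' ∧
         Y ∩ Tf = T' ∧
         Cardinal.mk ↥(Tfᶜ \ (Y \ T')) =
           Cardinal.mk ↥((Set.range f)ᶜ \ (Y \ f '' Y))) := by
  rw [compl_diff_diff_of_subset (image_subset_range f Y)]
  constructor
  · intro h
    obtain ⟨T, hT, hT', hc⟩ := exists_transversal_of_unitRegularElem_tSemi hm h
    refine ⟨unitRegularElem_restrict_of_tSemi hm h,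
      range_inter_eq_image_of_unitRegularElem_tSemi hm h, T, Y ∩ T, hT, hT', rfl, ?_⟩
    rwa [compl_diff_diff_of_subset inter_subset_right]
  · rintro ⟨hunit, hrange, T, _, hT, hT', rfl, hc⟩
    rw [compl_diff_diff_of_subset inter_subset_right] at hc
    exact unitRegularElem_tSemi_of_transversal hm hunit hrange hT hT' hc

theorem stmt5 {X : Type*} (Y : Set X) (S : Set (Y → Y)) (hY : Y.Nonempty)
    (hS : IsSubsemigroupOn S) (hid : id ∈ S)
    (f : X → X) (hm : MapsTo f Y Y) (hf : MapsTo.restrict f Y Y hm ∈ S) :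
    UnitRegularElem (TSemi Y S) f ↔
      (UnitRegularElem S (MapsTo.restrict f Y Y hm) ∧
       Set.range f ∩ Y = f '' Y ∧
       ∃ Tf T' : Set X, IsTransversalOf f Tf ∧ IsTransversalOfOn f Y T' ∧
         Y ∩ Tf = T' ∧
         Cardinal.mk ↥(Tfᶜ \ (Y \ T')) =
           Cardinal.mk ↥((Set.range f)ᶜ \ (Y \ f '' Y))) :=
  stmt5_general Y S f hm
end

section
/- Let X be a set, Y a nonempty subset of X, and S(Y) a subsemigroup of T(Y). If S(Y) is a subgroup of Sym(Y) and X \ Y is finite, then T_{S(Y)}(X) is a unit-regular semigroup. -/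
open Set Function

/-!
Let `f` restrict to the permutation `g ∈ S` of `Y`. A unit `u` with `f u f = f` is glued from
`g⁻¹` on `Y` and a permutation `σ` of the finite set `Yᶜ`: on `Yᶜ ∩ f(Yᶜ)` the map `σ` picks
`f`-preimages in `Yᶜ`, and since these preimages are distinct it extends to all of `Yᶜ`
by finiteness. Points of `f(X) ∩ Y` are handled by `g⁻¹`, because `f = g` on `Y`.
-/

theorem Equiv.Perm.exists_apply_eq_of_mem_range {α β : Type*} [Finite α] (φ ι : α → β)
    (hι : Injective ι) : ∃ σ : Equiv.Perm α, ∀ z, ι z ∈ range φ → φ (σ z) = ι z := by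
  choose p hp using fun z : {z // ι z ∈ range φ} => z.2
  have hp_inj : Injective p := fun a b hab =>
    Subtype.ext <| hι <| by rw [← hp a, ← hp b, hab]
  obtain ⟨σ, hσ⟩ := Equiv.Perm.exists_extending_pair _ p Subtype.val_injective hp_inj
  exact ⟨σ, fun z hz => (hσ ⟨z, hz⟩).symm ▸ hp ⟨z, hz⟩⟩

theorem IsSubgroupOfSym.exists_perm {A : Type*} {S : Set (A → A)} (hS : IsSubgroupOfSym S)
    {g : A → A} (hg : g ∈ S) : ∃ e : Equiv.Perm A, ⇑e = g ∧ ⇑e.symm ∈ S := by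
  obtain ⟨g', hg'S, hgg', hg'g⟩ := hS.2.2.2 g hg
  exact ⟨⟨g, g', congrFun hg'g, congrFun hgg'⟩, rfl, hg'S⟩

section TSemi

variable {X : Type*} {Y : Set X} {S : Set (Y → Y)} [DecidablePred (· ∈ Y)]

theorem mapsTo_subtypeCongr (ep : Equiv.Perm Y) (en : Equiv.Perm {x // x ∉ Y}) :
    MapsTo (ep.subtypeCongr en) Y Y := fun x hx => by
  rw [Equiv.Perm.subtypeCongr.left_apply ep en hx]
  exact (ep _).2

theorem restrict_subtypeCongr (ep : Equiv.Perm Y) (en : Equiv.Perm {x // x ∉ Y}) :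
    (mapsTo_subtypeCongr ep en).restrict = ⇑ep := by
  funext y
  exact Subtype.ext (Equiv.Perm.subtypeCongr.left_apply_subtype ep en y)

theorem subtypeCongr_mem_TSemi {ep : Equiv.Perm Y} (en : Equiv.Perm {x // x ∉ Y})
    (hep : ⇑ep ∈ S) : ⇑(ep.subtypeCongr en) ∈ TSemi Y S :=
  ⟨mapsTo_subtypeCongr ep en, (restrict_subtypeCongr ep en).symm ▸ hep⟩

theorem isUnitOn_subtypeCongr {ep : Equiv.Perm Y} (en : Equiv.Perm {x // x ∉ Y})
    (hep : ⇑ep ∈ S) (hep_symm : ⇑ep.symm ∈ S) : IsUnitOn (TSemi Y S) (ep.subtypeCongr en) :=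
  ⟨subtypeCongr_mem_TSemi en hep, ⇑(ep.subtypeCongr en).symm,
    subtypeCongr_mem_TSemi en.symm hep_symm, (ep.subtypeCongr en).self_comp_symm,
    (ep.subtypeCongr en).symm_comp_self⟩

end TSemi

theorem stmt6_general {X : Type*} (Y : Set X) (S : Set (Y → Y))
    (hgrp : IsSubgroupOfSym S) (hfin : Yᶜ.Finite) :
    IsUnitRegularOn (TSemi Y S) := by
  classical
  rintro f ⟨hf, hfS⟩
  obtain ⟨e, he, he_symm⟩ := hgrp.exists_perm hfS
  have hfe : ∀ y : Y, f y = e y := fun y => by rw [he]; rfl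
  have : Finite {x // x ∉ Y} := hfin.to_subtype
  obtain ⟨σ, hσ⟩ := Equiv.Perm.exists_apply_eq_of_mem_range
    (fun x : {x // x ∉ Y} => f x) Subtype.val Subtype.val_injective
  refine ⟨_, isUnitOn_subtypeCongr σ he_symm (he ▸ hfS), funext fun x => ?_⟩
  by_cases hfx : f x ∈ Y
  · simp [Equiv.Perm.subtypeCongr.left_apply _ _ hfx, hfe]
  · have hx : x ∉ Y := fun hx => hfx (hf hx)
    simp only [comp_apply, Equiv.Perm.subtypeCongr.right_apply _ _ hfx]
    exact hσ ⟨f x, hfx⟩ ⟨⟨x, hx⟩, rfl⟩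

theorem stmt6 {X : Type*} (Y : Set X) (S : Set (Y → Y)) (hY : Y.Nonempty)
    (hgrp : IsSubgroupOfSym S) (hfin : Yᶜ.Finite) :
    IsUnitRegularOn (TSemi Y S) :=
  stmt6_general Y S hgrp hfin
end

section
/- Let V be a vector space over a field, W a subspace, S(W) a subsemigroup of L(W), and f ∈ L_{S(W)}(V). Then f is a regular element of L_{S(W)}(V) if and only if (i) f↾W is a regular element of S(W), and (ii) R(f) ∩ W = R(f↾W). -/
open Set

/-- `S` is a subsemigroup of `L(M)` (closed under composition). -/
def LIsSubsemigroup {K M : Type*} [Field K] [AddCommGroup M] [Module K M]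
    (S : Set (M →ₗ[K] M)) : Prop :=
  ∀ a ∈ S, ∀ b ∈ S, a ∘ₗ b ∈ S

/-- `S` is a subgroup of `Aut(M)`. -/
def LIsSubgroupOfAut {K M : Type*} [Field K] [AddCommGroup M] [Module K M]
    (S : Set (M →ₗ[K] M)) : Prop :=
  LIsSubsemigroup S ∧ (∀ a ∈ S, Function.Bijective a) ∧ (LinearMap.id ∈ S) ∧
    ∀ a ∈ S, ∃ b ∈ S, a ∘ₗ b = LinearMap.id ∧ b ∘ₗ a = LinearMap.id

/-- `S` is a regular semigroup of linear maps: `∀ a ∈ S, ∃ b ∈ S, aba = a`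
(composed left to right, i.e. `x ↦ a (b (a x))`). -/
def LIsRegularOn {K M : Type*} [Field K] [AddCommGroup M] [Module K M]
    (S : Set (M →ₗ[K] M)) : Prop :=
  ∀ a ∈ S, ∃ b ∈ S, a ∘ₗ b ∘ₗ a = a

/-- `S` is an inverse semigroup of linear maps. -/
def LIsInverseOn {K M : Type*} [Field K] [AddCommGroup M] [Module K M]
    (S : Set (M →ₗ[K] M)) : Prop :=
  ∀ a ∈ S, ∃! b, b ∈ S ∧ a ∘ₗ b ∘ₗ a = a ∧ b ∘ₗ a ∘ₗ b = b

/-- `u` is a unit of the linear monoid `S`. -/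
def LIsUnitOn {K M : Type*} [Field K] [AddCommGroup M] [Module K M]
    (S : Set (M →ₗ[K] M)) (u : M →ₗ[K] M) : Prop :=
  u ∈ S ∧ ∃ v ∈ S, u ∘ₗ v = LinearMap.id ∧ v ∘ₗ u = LinearMap.id

/-- `a` is a unit-regular element of `S`. -/
def LUnitRegularElem {K M : Type*} [Field K] [AddCommGroup M] [Module K M]
    (S : Set (M →ₗ[K] M)) (a : M →ₗ[K] M) : Prop :=
  ∃ u, LIsUnitOn S u ∧ a ∘ₗ u ∘ₗ a = a

/-- `S` is a unit-regular linear monoid. -/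
def LIsUnitRegularOn {K M : Type*} [Field K] [AddCommGroup M] [Module K M]
    (S : Set (M →ₗ[K] M)) : Prop :=
  ∀ a ∈ S, LUnitRegularElem S a

/-- `G` is a subgroup contained in the semigroup `S` of linear maps. -/
def LIsSubgroupIn {K M : Type*} [Field K] [AddCommGroup M] [Module K M]
    (S G : Set (M →ₗ[K] M)) : Prop :=
  G ⊆ S ∧ (∀ a ∈ G, ∀ b ∈ G, a ∘ₗ b ∈ G) ∧
    ∃ e ∈ G, (∀ a ∈ G, a ∘ₗ e = a ∧ e ∘ₗ a = a) ∧
      ∀ a ∈ G, ∃ b ∈ G, a ∘ₗ b = e ∧ b ∘ₗ a = e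

/-- `S` is a completely regular semigroup of linear maps: every element
belongs to a subgroup of `S`. -/
def LIsCompletelyRegularOn {K M : Type*} [Field K] [AddCommGroup M] [Module K M]
    (S : Set (M →ₗ[K] M)) : Prop :=
  ∀ a ∈ S, ∃ G, LIsSubgroupIn S G ∧ a ∈ G

/-- The semigroup `L_{S(W)}(V)` of all linear self-maps of `V` that leave `W`
invariant and whose restriction to `W` lies in `S`. -/
def LSemi {K V : Type*} [Field K] [AddCommGroup V] [Module K V] (W : Submodule K V)
    (S : Set (W →ₗ[K] W)) : Set (V →ₗ[K] V) :=
  {f | ∃ h : ∀ x ∈ W, f x ∈ W, f.restrict h ∈ S}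

/-! If `f g f = f` with `g` leaving `W` invariant, restricting gives (i), and every `f v ∈ W`
equals `f (g (f v))` with `g (f v) ∈ W`, which gives (ii). Conversely, let `b` be an inner
inverse of `f↾W`. Condition (ii) says that `f b` is the identity on `R(f) ∩ W`. Split
`R(f) = (R(f) ∩ W) ⊕ R`; then `R` meets `W` trivially, so there is a linear map `g` that is
`b` on `W` and a section of `f` on `R`, and `f g` is the identity on `R(f)`. -/

open Submodule

namespace LinearMap

section Restrict

variable {R M : Type*} [Semiring R] [AddCommMonoid M] [Module R M] {f g : M →ₗ[R] M}
  {W : Submodule R M}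

theorem map_subtype_range_restrict (hf : ∀ x ∈ W, f x ∈ W) :
    (range (f.restrict hf)).map W.subtype = W.map f := by
  rw [range_restrict, map_comap_subtype]
  exact inf_eq_right.2 (map_le_iff_le_comap.2 hf)

theorem range_inf_le_map_of_comp_comp_eq (hg : ∀ x ∈ W, g x ∈ W) (hfgf : f ∘ₗ g ∘ₗ f = f) :
    range f ⊓ W ≤ W.map f := by
  rintro _ ⟨⟨v, rfl⟩, hv⟩
  exact ⟨g (f v), hg _ hv, congr($hfgf v)⟩

theorem restrict_eq_of_comp_subtype_eq {b : W →ₗ[R] W} (hgb : g ∘ₗ W.subtype = W.subtype ∘ₗ b) :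
    ∃ hg : ∀ x ∈ W, g x ∈ W, g.restrict hg = b := by
  have hgx (x : W) : g x = b x := congr($hgb x)
  exact ⟨fun x hx ↦ hgx ⟨x, hx⟩ ▸ (b _).2, ext fun x ↦ Subtype.ext (hgx x)⟩

end Restrict

variable {K V E : Type*} [Field K] [AddCommGroup V] [Module K V] [AddCommGroup E] [Module K E]

theorem exists_extend_of_disjoint {p q : Submodule K V} (hpq : Disjoint p q)
    (φ : p →ₗ[K] E) (ψ : q →ₗ[K] E) :
    ∃ g : V →ₗ[K] E, g ∘ₗ p.subtype = φ ∧ g ∘ₗ q.subtype = ψ := by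
  have hagree := LinearPMap.sup_h_of_disjoint ⟨p, φ⟩ ⟨q, ψ⟩ hpq
  obtain ⟨g, hg⟩ := (LinearPMap.sup _ _ hagree).toFun.exists_extend
  have hφ := (LinearPMap.left_le_sup _ _ hagree).2
  have hψ := (LinearPMap.right_le_sup _ _ hagree).2
  refine ⟨g, ext fun x ↦ ?_, ext fun y ↦ ?_⟩
  · exact (congr($hg ⟨x, mem_sup_left x.2⟩)).trans (hφ rfl).symm
  · exact (congr($hg ⟨y, mem_sup_right y.2⟩)).trans (hψ rfl).symm

theorem exists_comp_comp_eq_of_range_inf_le {f : V →ₗ[K] V} {W : Submodule K V}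
    (hf : ∀ x ∈ W, f x ∈ W) {b : W →ₗ[K] W}
    (hb : f.restrict hf ∘ₗ b ∘ₗ f.restrict hf = f.restrict hf) (hrange : range f ⊓ W ≤ W.map f) :
    ∃ g : V →ₗ[K] V, g ∘ₗ W.subtype = W.subtype ∘ₗ b ∧ f ∘ₗ g ∘ₗ f = f := by
  have hfb (u : V) (hu : u ∈ range f ⊓ W) : f (b ⟨u, hu.2⟩) = u := by
    obtain ⟨w, hw, rfl⟩ := hrange hu
    exact congr(($hb ⟨w, hw⟩ : V))
  obtain ⟨C, hC⟩ := Submodule.exists_isCompl (range f ⊓ W)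
  have hsup : range f ⊓ W ⊔ C ⊓ range f = range f := by
    rw [← sup_inf_assoc_of_le _ inf_le_left, hC.sup_eq_top, top_inf_eq]
  have hdisj : Disjoint W (C ⊓ range f) :=
    disjoint_iff_inf_le.2 fun x ⟨hxW, hxC, hxf⟩ ↦ hC.disjoint.le_bot ⟨⟨hxf, hxW⟩, hxC⟩
  obtain ⟨s, hs⟩ := f.rangeRestrict.exists_rightInverse_of_surjective f.range_rangeRestrict
  obtain ⟨g, hgW, hgC⟩ :=
    exists_extend_of_disjoint hdisj (W.subtype ∘ₗ b) (s ∘ₗ inclusion inf_le_right)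
  refine ⟨g, hgW, ext fun v ↦ ?_⟩
  obtain ⟨u, hu, r, hr, huv⟩ := mem_sup.1 (hsup.ge ⟨v, rfl⟩)
  have hgu : g u = b ⟨u, hu.2⟩ := congr($hgW ⟨u, hu.2⟩)
  have hfgr : f (g r) = r := by
    rw [show g r = s ⟨r, hr.2⟩ from congr($hgC ⟨r, hr⟩)]
    exact congr(($hs ⟨r, hr.2⟩ : V))
  simp only [comp_apply, ← huv, map_add, hgu, hfb u hu, hfgr]

end LinearMap

theorem stmt9_general {K V : Type*} [Field K] [AddCommGroup V] [Module K V]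
    (W : Submodule K V) (S : Set (W →ₗ[K] W))
    (f : V →ₗ[K] V) (h : ∀ x ∈ W, f x ∈ W) :
    (∃ g ∈ LSemi W S, f ∘ₗ g ∘ₗ f = f) ↔
      ((∃ b ∈ S, f.restrict h ∘ₗ b ∘ₗ f.restrict h = f.restrict h) ∧
       LinearMap.range f ⊓ W = (LinearMap.range (f.restrict h)).map W.subtype) := by
  rw [LinearMap.map_subtype_range_restrict]
  constructor
  · rintro ⟨g, ⟨hg, hgS⟩, hfgf⟩
    refine ⟨⟨g.restrict hg, hgS, ?_⟩, le_antisymm ?_ ?_⟩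
    · ext x
      exact congr($hfgf x)
    · exact LinearMap.range_inf_le_map_of_comp_comp_eq hg hfgf
    · exact le_inf LinearMap.map_le_range (map_le_iff_le_comap.2 h)
  · rintro ⟨⟨b, hbS, hb⟩, hrange⟩
    obtain ⟨g, hgb, hfgf⟩ := LinearMap.exists_comp_comp_eq_of_range_inf_le h hb hrange.le
    obtain ⟨hg, hgb⟩ := LinearMap.restrict_eq_of_comp_subtype_eq hgb
    exact ⟨g, ⟨hg, hgb ▸ hbS⟩, hfgf⟩

theorem stmt9 {K V : Type*} [Field K] [AddCommGroup V] [Module K V]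
    (W : Submodule K V) (S : Set (W →ₗ[K] W)) (hS : LIsSubsemigroup S)
    (f : V →ₗ[K] V) (h : ∀ x ∈ W, f x ∈ W) (hf : f.restrict h ∈ S) :
    (∃ g ∈ LSemi W S, f ∘ₗ g ∘ₗ f = f) ↔
      ((∃ b ∈ S, f.restrict h ∘ₗ b ∘ₗ f.restrict h = f.restrict h) ∧
       LinearMap.range f ⊓ W = (LinearMap.range (f.restrict h)).map W.subtype) :=
  stmt9_general W S f h
end

section
/- Let V be a vector space over a field, W a subspace, and S(W) a subsemigroup of L(W) that is a subgroup of Aut(W). Then L_{S(W)}(V) is a regular semigroup. -/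
open Set

namespace LinearMap

variable {K V V' : Type*} [DivisionRing K] [AddCommGroup V] [Module K V]
  [AddCommGroup V'] [Module K V']

/-- Choose a complement `U` of `ker f` containing `W`; `f` is injective on `U`, and a left
inverse of `f` on `U` is an inner inverse of `f` that inverts `f` on `W`. -/
theorem exists_innerInverse_of_disjoint_ker (f : V →ₗ[K] V') {W : Submodule K V}
    (hW : Disjoint W (ker f)) :
    ∃ b : V' →ₗ[K] V, f ∘ₗ b ∘ₗ f = f ∧ ∀ w ∈ W, b (f w) = w := by
  obtain ⟨U, hWU, hU⟩ := hW.exists_isCompl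
  have hker : ker (f ∘ₗ U.subtype) = ⊥ := by
    rw [ker_comp, ← Submodule.disjoint_iff_comap_eq_bot]
    exact hU.disjoint
  obtain ⟨h, hh⟩ := (f ∘ₗ U.subtype).exists_leftInverse_of_injective hker
  have hleft (u : V) (hu : u ∈ U) : h (f u) = ⟨u, hu⟩ := LinearMap.congr_fun hh ⟨u, hu⟩
  refine ⟨U.subtype ∘ₗ h, ?_, fun w hw ↦ by simp [hleft w (hWU hw)]⟩
  ext v
  have hv : v ∈ U ⊔ ker f := hU.sup_eq_top ▸ Submodule.mem_top
  obtain ⟨u, hu, k, hk, rfl⟩ := Submodule.mem_sup.mp hv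
  rw [mem_ker] at hk
  simp [hk, hleft u hu]

theorem exists_innerInverse_restrict_eq {f : V →ₗ[K] V} {W : Submodule K V}
    (hf : ∀ x ∈ W, f x ∈ W) {g' : W →ₗ[K] W}
    (hright : f.restrict hf ∘ₗ g' = id) (hleft : g' ∘ₗ f.restrict hf = id) :
    ∃ b : V →ₗ[K] V, f ∘ₗ b ∘ₗ f = f ∧ ∃ hb : ∀ x ∈ W, b x ∈ W, b.restrict hb = g' := by
  have hdisj : Disjoint W (ker f) := by
    rw [Submodule.disjoint_def]
    intro w hw hfw
    have hfw' : f.restrict hf ⟨w, hw⟩ = 0 := Subtype.ext hfw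
    have := LinearMap.congr_fun hleft ⟨w, hw⟩
    rw [comp_apply, hfw', map_zero] at this
    simpa using congrArg Subtype.val this.symm
  obtain ⟨b, hfbf, hbf⟩ := f.exists_innerInverse_of_disjoint_ker hdisj
  have hbW (w : W) : b w = g' w := by
    have hfg' : f (g' w) = w := congrArg Subtype.val (LinearMap.congr_fun hright w)
    rw [← hbf _ (g' w).2, hfg']
  refine ⟨b, hfbf, fun w hw ↦ hbW ⟨w, hw⟩ ▸ (g' _).2, ?_⟩
  ext w
  exact hbW w

end LinearMap

theorem stmt10 {K V : Type*} [Field K] [AddCommGroup V] [Module K V]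
    (W : Submodule K V) (S : Set (W →ₗ[K] W)) (hgrp : LIsSubgroupOfAut S) :
    LIsRegularOn (LSemi W S) := by
  rintro f ⟨hf, hfS⟩
  obtain ⟨g', hg'S, hright, hleft⟩ := hgrp.2.2.2 _ hfS
  obtain ⟨b, hfbf, hb, hbg'⟩ := LinearMap.exists_innerInverse_restrict_eq hf hright hleft
  exact ⟨b, ⟨hb, hbg' ▸ hg'S⟩, hfbf⟩
end

section
/- Let V be a vector space over a field, W a subspace, and S(W) a subsemigroup of L(W). Then L_{S(W)}(V) is a regular semigroup if and only if either (i) S(W) is a subgroup of Aut(W), or (ii) S(W) is regular and W = V. -/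
open Set

/-!
If `L_{S(W)}(V)` is regular, extending elements of `S(W)` to `V` shows that `S(W)` is regular.
When `W ≠ V`, an element `a ∈ S(W)` extends to an `f` sending a vector outside `W` to any
prescribed `w ∈ W`; if `fgf = f` with `g` preserving `W`, then `range f ∩ W = f(W)`, so `a` is
onto. A regular semigroup of surjective maps is a group, since `aba = a` forces `ab = 1`.

Conversely, given `f` with `f|_W = a` and `b ∈ S(W)` with `aba = a`, let `g` be `b` on `W` and
a generalized inverse of `f` on a complement `U` of `W`. Then `fgf = f` as soon as
`range f ⊆ f(W) + U`, which holds both when `a` is onto `W` and when `W = V`.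
-/

section

variable {K V : Type*} [Field K] [AddCommGroup V] [Module K V] {W : Submodule K V}

theorem subtype_comp_mem_lSemi {S : Set (W →ₗ[K] W)} {φ : V →ₗ[K] W}
    (h : φ ∘ₗ W.subtype ∈ S) : W.subtype ∘ₗ φ ∈ LSemi W S :=
  ⟨fun x _ => (φ x).2, h⟩

theorem LinearMap.restrict_comp_comp_eq {f g : V →ₗ[K] V} (hf : ∀ x ∈ W, f x ∈ W)
    (hg : ∀ x ∈ W, g x ∈ W) (h : f ∘ₗ g ∘ₗ f = f) :
    f.restrict hf ∘ₗ g.restrict hg ∘ₗ f.restrict hf = f.restrict hf :=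
  LinearMap.ext fun x => Subtype.ext (LinearMap.congr_fun h x)

theorem LinearMap.range_inf_le_map_of_comp_comp_eq_s11 {f g : V →ₗ[K] V}
    (hg : ∀ x ∈ W, g x ∈ W) (h : f ∘ₗ g ∘ₗ f = f) : LinearMap.range f ⊓ W ≤ W.map f := by
  rintro _ ⟨⟨x, rfl⟩, hx⟩
  exact ⟨g (f x), hg _ hx, LinearMap.congr_fun h x⟩

theorem LIsRegularOn.of_lSemi {S : Set (W →ₗ[K] W)} (hreg : LIsRegularOn (LSemi W S)) :
    LIsRegularOn S := by
  intro a ha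
  obtain ⟨φ, rfl⟩ := LinearMap.exists_extend a
  obtain ⟨g, ⟨hg, hgS⟩, hfgf⟩ := hreg _ (subtype_comp_mem_lSemi ha)
  exact ⟨g.restrict hg, hgS, LinearMap.restrict_comp_comp_eq (fun x _ => (φ x).2) hg hfgf⟩

theorem LIsRegularOn.surjective_of_lSemi {S : Set (W →ₗ[K] W)}
    (hreg : LIsRegularOn (LSemi W S)) (hW : W ≠ ⊤) : ∀ a ∈ S, Function.Surjective a := by
  intro a ha w
  obtain ⟨v, hv⟩ : ∃ v, v ∉ W := by
    by_contra! h
    exact hW (eq_top_iff.2 fun x _ => h x)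
  obtain ⟨φ, rfl, hφv⟩ := LinearMap.exists_extend_of_notMem a hv w
  obtain ⟨g, ⟨hg, -⟩, hfgf⟩ := hreg _ (subtype_comp_mem_lSemi ha)
  obtain ⟨x, hx, hxw⟩ := LinearMap.range_inf_le_map_of_comp_comp_eq_s11 hg hfgf
    ⟨⟨v, rfl⟩, show ((φ v : W) : V) ∈ W from (φ v).2⟩
  exact ⟨⟨x, hx⟩, Subtype.ext (hxw.trans (by simp [hφv]))⟩

theorem LIsSubgroupOfAut.of_lIsRegularOn {M : Type*} [AddCommGroup M] [Module K M]
    {S : Set (M →ₗ[K] M)} (hSne : S.Nonempty) (hS : LIsSubsemigroup S)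
    (hreg : LIsRegularOn S) (hsurj : ∀ a ∈ S, Function.Surjective a) :
    LIsSubgroupOfAut S := by
  have hright : ∀ a ∈ S, ∃ b ∈ S, a ∘ₗ b = LinearMap.id := by
    intro a ha
    obtain ⟨b, hb, hab⟩ := hreg a ha
    refine ⟨b, hb, (LinearMap.cancel_right (hsurj a ha)).1 ?_⟩
    rw [LinearMap.comp_assoc, hab, LinearMap.id_comp]
  have hinv : ∀ a ∈ S, ∃ b ∈ S, a ∘ₗ b = LinearMap.id ∧ b ∘ₗ a = LinearMap.id := by
    intro a ha
    obtain ⟨b, hb, hab⟩ := hright a ha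
    obtain ⟨c, -, hbc⟩ := hright b hb
    have hac : a = c := by
      calc a = a ∘ₗ b ∘ₗ c := by rw [hbc, LinearMap.comp_id]
        _ = c := by rw [← LinearMap.comp_assoc, hab, LinearMap.id_comp]
    exact ⟨b, hb, hab, hac ▸ hbc⟩
  refine ⟨hS, fun a ha => ?_, ?_, hinv⟩
  · obtain ⟨b, -, hab, hba⟩ := hinv a ha
    exact ⟨LinearMap.injective_of_comp_eq_id a b hba, LinearMap.surjective_of_comp_eq_id b a hab⟩
  · obtain ⟨a, ha⟩ := hSne
    obtain ⟨b, hb, hab, -⟩ := hinv a ha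
    exact hab ▸ hS a ha b hb

theorem exists_restrict_eq_and_comp_comp_eq {U : Submodule K V} (hU : IsCompl W U)
    {f : V →ₗ[K] V} (hf : ∀ x ∈ W, f x ∈ W) {b : W →ₗ[K] W}
    (hb : f.restrict hf ∘ₗ b ∘ₗ f.restrict hf = f.restrict hf)
    (hrange : LinearMap.range f ≤ W.map f ⊔ U) :
    ∃ g : V →ₗ[K] V, ∃ hg : ∀ x ∈ W, g x ∈ W, g.restrict hg = b ∧ f ∘ₗ g ∘ₗ f = f := by
  obtain ⟨t, ht⟩ := f.rangeRestrict.exists_rightInverse_of_surjective f.range_rangeRestrict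
  obtain ⟨g₀, rfl⟩ := LinearMap.exists_extend t
  have hfg₀ : ∀ y : LinearMap.range f, f (g₀ y) = y := fun y =>
    congrArg Subtype.val (LinearMap.congr_fun ht y)
  set g := LinearMap.ofIsCompl hU (W.subtype ∘ₗ b) (g₀ ∘ₗ U.subtype)
  have hgW : ∀ w : W, g w = b w := fun w => LinearMap.ofIsCompl_apply_left hU w
  refine ⟨g, fun x hx => (hgW ⟨x, hx⟩).symm ▸ (b _).2,
    LinearMap.ext fun w => Subtype.ext (hgW w), LinearMap.ext fun x => ?_⟩
  obtain ⟨_, ⟨w, hw, rfl⟩, u, hu, hfx⟩ := Submodule.mem_sup.1 (hrange ⟨x, rfl⟩)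
  have hu' : u ∈ LinearMap.range f := ⟨x - w, by rw [map_sub, ← hfx, add_sub_cancel_left]⟩
  have hfgw : f (g (f w)) = f w := by
    rw [show f w = (f.restrict hf ⟨w, hw⟩ : V) from rfl, hgW]
    exact congrArg Subtype.val (LinearMap.congr_fun hb ⟨w, hw⟩)
  have hfgu : f (g u) = u := by
    rw [show g u = g₀ u from LinearMap.ofIsCompl_apply_right hU ⟨u, hu⟩]
    exact hfg₀ ⟨u, hu'⟩
  simp only [LinearMap.comp_apply]
  rw [← hfx, map_add, map_add, hfgw, hfgu]

theorem LIsRegularOn.lSemi_of_lIsSubgroupOfAut {S : Set (W →ₗ[K] W)}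
    (hS : LIsSubgroupOfAut S) : LIsRegularOn (LSemi W S) := by
  rintro f ⟨hf, ha⟩
  obtain ⟨b, hb, hab, -⟩ := hS.2.2.2 _ ha
  obtain ⟨U, hU⟩ := W.exists_isCompl
  have hW : W ≤ W.map f := fun w hw =>
    ⟨b ⟨w, hw⟩, (b _).2, congrArg Subtype.val (LinearMap.congr_fun hab ⟨w, hw⟩)⟩
  have hrange : LinearMap.range f ≤ W.map f ⊔ U :=
    calc LinearMap.range f ≤ W ⊔ U := hU.sup_eq_top ▸ le_top
      _ ≤ W.map f ⊔ U := sup_le_sup_right hW U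
  obtain ⟨g, hg, hgb, hfgf⟩ := exists_restrict_eq_and_comp_comp_eq hU hf
    (by rw [← LinearMap.comp_assoc, hab, LinearMap.id_comp]) hrange
  exact ⟨g, ⟨hg, hgb ▸ hb⟩, hfgf⟩

theorem LIsRegularOn.lSemi_top {S : Set ((⊤ : Submodule K V) →ₗ[K] (⊤ : Submodule K V))}
    (hS : LIsRegularOn S) : LIsRegularOn (LSemi ⊤ S) := by
  rintro f ⟨hf, ha⟩
  obtain ⟨b, hb, hab⟩ := hS _ ha
  obtain ⟨g, hg, hgb, hfgf⟩ := exists_restrict_eq_and_comp_comp_eq isCompl_top_bot hf hab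
    (by rw [Submodule.map_top]; exact le_sup_left)
  exact ⟨g, ⟨hg, hgb ▸ hb⟩, hfgf⟩

end

theorem stmt11 {K V : Type*} [Field K] [AddCommGroup V] [Module K V]
    (W : Submodule K V) (S : Set (W →ₗ[K] W)) (hSne : S.Nonempty)
    (hS : LIsSubsemigroup S) :
    LIsRegularOn (LSemi W S) ↔
      (LIsSubgroupOfAut S ∨ (LIsRegularOn S ∧ W = ⊤)) := by
  refine ⟨fun hreg => ?_, ?_⟩
  · by_cases hW : W = ⊤
    · exact Or.inr ⟨hreg.of_lSemi, hW⟩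
    · exact Or.inl (.of_lIsRegularOn hSne hS hreg.of_lSemi (hreg.surjective_of_lSemi hW))
  · rintro (hgrp | ⟨hreg, rfl⟩)
    · exact .lSemi_of_lIsSubgroupOfAut hgrp
    · exact hreg.lSemi_top
end

section
/- Let V be a vector space over a field, W a subspace, S(W) a subsemigroup of L(W), and f ∈ L_{S(W)}(V). Then there exists a subspace U of V such that U is a (linear) transversal of ker(f) and U ∩ W is a transversal of ker(f↾W); that is, f restricts to a bijection from U onto R(f) and f↾W restricts to a bijection from U ∩ W onto R(f↾W). -/
open Set

/-!
Choose a complement `d` of `ker f ⊓ W` inside `W`; it meets `ker f` trivially, so it extends to a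
complement `U` of `ker f` in `V`. A complement of `ker f` is a transversal of `ker f`, and since
`U ⊓ W ⊇ d` together with `ker f` spans `W`, `U ⊓ W` is a transversal of the kernel of `f↾W`.
-/

theorem exists_isCompl_le_inf_sup {α : Type*} [Lattice α] [BoundedOrder α] [IsModularLattice α]
    [ComplementedLattice α] (a b : α) : ∃ c, IsCompl c b ∧ a ≤ c ⊓ a ⊔ b := by
  obtain ⟨d, hd_disj, hd⟩ :=
    IsModularLattice.exists_disjoint_and_sup_eq (inf_le_left : a ⊓ b ≤ a)
  have hda : d ≤ a := hd ▸ le_sup_right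
  have hdb : Disjoint d b := disjoint_iff.mpr <| by
    rw [← inf_eq_left.mpr hda, inf_assoc]
    exact hd_disj.symm.eq_bot
  obtain ⟨c, hdc, hc⟩ := hdb.exists_isCompl
  refine ⟨c, hc, ?_⟩
  calc a = a ⊓ b ⊔ d := hd.symm
    _ ≤ c ⊓ a ⊔ b := sup_le (le_sup_of_le_right inf_le_right)
        (le_sup_of_le_left (le_inf hdc hda))

theorem LinearMap.existsUnique_mem_apply_eq_of_mem_sup_ker {R V M : Type*} [Ring R]
    [AddCommGroup V] [Module R V] [AddCommGroup M] [Module R M] (f : V →ₗ[R] M)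
    {U : Submodule R V} (hU : Disjoint U (LinearMap.ker f)) {v : V}
    (hv : v ∈ U ⊔ LinearMap.ker f) : ∃! u, u ∈ U ∧ f u = f v := by
  obtain ⟨u, hu, k, hk, rfl⟩ := Submodule.mem_sup.mp hv
  refine ⟨u, ⟨hu, by simp [LinearMap.mem_ker.mp hk]⟩, ?_⟩
  rintro u' ⟨hu', hfu'⟩
  have hker : u' - u ∈ LinearMap.ker f := by simp [hfu', LinearMap.mem_ker.mp hk]
  exact sub_eq_zero.mp (Submodule.disjoint_def.mp hU _ (U.sub_mem hu' hu) hker)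

theorem stmt12_general {K V : Type*} [Field K] [AddCommGroup V] [Module K V]
    (W : Submodule K V) (f : V →ₗ[K] V) :
    ∃ U : Submodule K V,
      (∀ v : V, ∃! u, u ∈ U ∧ f u = f v) ∧
      (∀ w ∈ W, ∃! u, u ∈ U ⊓ W ∧ f u = f w) := by
  obtain ⟨U, hU, hW⟩ := exists_isCompl_le_inf_sup W (LinearMap.ker f)
  refine ⟨U, fun v => ?_, fun w hw => ?_⟩
  · exact f.existsUnique_mem_apply_eq_of_mem_sup_ker hU.disjoint
      (hU.codisjoint.eq_top ▸ Submodule.mem_top)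
  · exact f.existsUnique_mem_apply_eq_of_mem_sup_ker (hU.disjoint.mono_left inf_le_left)
      (hW hw)

theorem stmt12 {K V : Type*} [Field K] [AddCommGroup V] [Module K V]
    (W : Submodule K V) (S : Set (W →ₗ[K] W)) (hS : LIsSubsemigroup S)
    (f : V →ₗ[K] V) (hf : f ∈ LSemi W S) :
    ∃ U : Submodule K V,
      (∀ v : V, ∃! u, u ∈ U ∧ f u = f v) ∧
      (∀ w ∈ W, ∃! u, u ∈ U ⊓ W ∧ f u = f w) :=
  stmt12_general W f
end

section
/- Let V be a vector space over a field, W a subspace, and S(W) a subsemigroup of L(W) with I_W ∈ S(W). Let f ∈ L_{S(W)}(V). Then f is unit-regular in L_{S(W)}(V) if and only if (i) f↾W is unit-regular in S(W), (ii) R(f) ∩ W = R(f↾W), and (iii) codim(W + T_f) = codim(W + R(f)) for some subspace T_f of V such that T_f and W ∩ T_f are transversals of ker(f) and ker(f↾W), respectively. -/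
open Set

/-!
If `f ∘ u ∘ f = f` for a unit `u` of `L_{S(W)}(V)`, then `u` maps `W` onto itself, `T = u(R(f))`
is a transversal of `ker f` whose trace on `W` is a transversal of `ker (f↾W)`, and `u` carries
`W + R(f)` onto `W + T`, so the two quotients have the same dimension.

Conversely, given `u₀` with `f↾W ∘ u₀ ∘ f↾W = f↾W`, pick a complement `C` of `R(f) ∩ W` in `R(f)`,
so that `W + R(f) = W ⊕ C`. The map that is `u₀` on `W` and the inverse of `f : T ≃ R(f)` on `C`
is injective on `W ⊕ C`, with image `W + T`: by (ii), `f t = f w + c` with `w ∈ W`, `c ∈ C` for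
every `t ∈ T`, and `T ∩ W` contains a preimage of `f w`, so `t ∈ W + (f↾T)⁻¹(C)`. As `W ⊕ C` and
`W + T` have the same codimension, this map extends to an automorphism `σ` of `V`, which restricts
to `u₀` on `W` and satisfies `f ∘ σ ∘ f = f` because `σ` inverts `f` on `R(f) ∩ W = f(W)` (through
`u₀`) and on `C`.
-/

theorem exists_le_disjoint_and_sup_eq {α : Type*} [Lattice α] [BoundedOrder α] [IsModularLattice α]
    [ComplementedLattice α] (a b : α) : ∃ c ≤ b, Disjoint a c ∧ a ⊔ c = a ⊔ b := by
  obtain ⟨c, hdisj, hsup⟩ := IsModularLattice.exists_disjoint_and_sup_eq (inf_le_right : a ⊓ b ≤ b)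
  refine ⟨c, hsup ▸ le_sup_right, ?_, ?_⟩
  · rw [disjoint_iff, ← inf_eq_right.mpr (hsup ▸ le_sup_right : c ≤ b), ← inf_assoc]
    exact disjoint_iff.mp hdisj
  · rw [← hsup, ← sup_assoc, sup_inf_self]

namespace Submodule

variable {K V M : Type*} [Field K] [AddCommGroup V] [Module K V] [AddCommGroup M] [Module K M]

theorem exists_linearMap_eq_of_disjoint {A B : Submodule K V} (hAB : Disjoint A B)
    (φ : A →ₗ[K] M) (ψ : B →ₗ[K] M) :
    ∃ χ : V →ₗ[K] M, (∀ a : A, χ a = φ a) ∧ ∀ b : B, χ b = ψ b := by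
  have hker : LinearMap.ker (A.subtype.coprod B.subtype) = ⊥ := by
    rw [LinearMap.ker_coprod_of_disjoint_range _ _ (by simpa using hAB)]
    simp
  obtain ⟨g, hg⟩ := (A.subtype.coprod B.subtype).exists_leftInverse_of_injective hker
  refine ⟨φ.coprod ψ ∘ₗ g, fun a => ?_, fun b => ?_⟩
  · simpa using congr(φ.coprod ψ ($hg (a, 0)))
  · simpa using congr(φ.coprod ψ ($hg (0, b)))

theorem exists_linearEquiv_eqOn_of_rank_quotient_eq (φ : V →ₗ[K] V) {P : Submodule K V}
    (hφ : LinearMap.ker (φ.domRestrict P) = ⊥)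
    (hrank : Module.rank K (V ⧸ P) = Module.rank K (V ⧸ P.map φ)) :
    ∃ σ : V ≃ₗ[K] V, ∀ x ∈ P, σ x = φ x := by
  obtain ⟨D, hD⟩ := P.exists_isCompl
  obtain ⟨D', hD'⟩ := (P.map φ).exists_isCompl
  obtain ⟨e⟩ : Nonempty (D ≃ₗ[K] D') := nonempty_linearEquiv_of_rank_eq <| by
    rw [← (quotientEquivOfIsCompl _ _ hD).rank_eq, ← (quotientEquivOfIsCompl _ _ hD').rank_eq,
      hrank]
  let e₀ : P ≃ₗ[K] P.map φ := (LinearEquiv.ofInjective _ (LinearMap.ker_eq_bot.mp hφ)).trans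
    (LinearEquiv.ofEq _ _ (LinearMap.range_domRestrict P φ))
  refine ⟨(prodEquivOfIsCompl P D hD).symm ≪≫ₗ e₀.prodCongr e ≪≫ₗ prodEquivOfIsCompl _ _ hD',
    fun x hx => ?_⟩
  simp [e₀, prodEquivOfIsCompl_symm_apply_left P D hD ⟨x, hx⟩]

end Submodule

namespace LinearMap

variable {K V M : Type*} [Field K] [AddCommGroup V] [Module K V] [AddCommGroup M] [Module K M]

theorem exists_section_of_existsUnique (f : V →ₗ[K] M) {T : Submodule K V}
    (hT : ∀ x, ∃! y, y ∈ T ∧ f y = f x) :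
    ∃ G : LinearMap.range f →ₗ[K] V, ∀ r, G r ∈ T ∧ f (G r) = r := by
  have hinj : Function.Injective (f.domRestrict T) := fun t t' htt' =>
    Subtype.ext <| (hT t).unique ⟨t.2, rfl⟩ ⟨t'.2, htt'.symm⟩
  have hrange : LinearMap.range f = LinearMap.range (f.domRestrict T) := by
    refine le_antisymm ?_ (by rw [LinearMap.range_domRestrict]; exact LinearMap.map_le_range)
    rintro _ ⟨x, rfl⟩
    obtain ⟨y, ⟨hy, hfy⟩, -⟩ := hT x
    exact ⟨⟨y, hy⟩, hfy⟩
  let e := LinearEquiv.ofEq _ _ hrange ≪≫ₗ (LinearEquiv.ofInjective _ hinj).symm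
  refine ⟨T.subtype ∘ₗ e.toLinearMap, fun r => ⟨(e r).2, ?_⟩⟩
  have := LinearEquiv.ofInjective_apply _ (h := hinj) (e r)
  simp only [e, LinearEquiv.trans_apply, LinearEquiv.apply_symm_apply] at this
  exact this.symm

end LinearMap

section InvariantSubspace

variable {K V : Type*} [Field K] [AddCommGroup V] [Module K V] {W : Submodule K V}
  {f : V →ₗ[K] V}

theorem map_subtype_range_restrict (h : ∀ x ∈ W, f x ∈ W) :
    (LinearMap.range (f.restrict h)).map W.subtype = W.map f := by
  rw [LinearMap.range_restrict, Submodule.map_comap_subtype, inf_eq_right]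
  exact Submodule.map_le_iff_le_comap.mpr h

theorem range_inf_eq_map_of_comp_comp_eq (h : ∀ x ∈ W, f x ∈ W) {u : V →ₗ[K] V}
    (hu : ∀ x ∈ W, u x ∈ W) (hfuf : f ∘ₗ u ∘ₗ f = f) :
    LinearMap.range f ⊓ W = W.map f := by
  refine le_antisymm ?_ (le_inf LinearMap.map_le_range (Submodule.map_le_iff_le_comap.mpr h))
  rintro _ ⟨⟨y, rfl⟩, hy⟩
  exact ⟨u (f y), hu _ hy, congr($hfuf y)⟩

theorem exists_transversal_of_comp_comp_eq (h : ∀ x ∈ W, f x ∈ W) (σ : V ≃ₗ[K] V)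
    (hσ : W.map (σ : V →ₗ[K] V) = W)
    (hfσf : f ∘ₗ σ.toLinearMap ∘ₗ f = f) :
    ∃ T : Submodule K V,
      (∀ x, ∃! y, y ∈ T ∧ f y = f x) ∧
      (∀ w ∈ W, ∃! y, y ∈ T ⊓ W ∧ f y = f w) ∧
      Module.rank K (V ⧸ (W ⊔ T)) = Module.rank K (V ⧸ (W ⊔ LinearMap.range f)) := by
  have hfσ : ∀ x, f (σ (f x)) = f x := fun x => congr($hfσf x)
  have hσW : ∀ x ∈ W, σ x ∈ W := fun x hx => hσ ▸ Submodule.mem_map_of_mem hx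
  have huniq : ∀ x z, f (σ (f z)) = f x → σ (f z) = σ (f x) := fun x z hz => by
    rw [← hz, hfσ]
  refine ⟨(LinearMap.range f).map (σ : V →ₗ[K] V), fun x => ?_, fun w hw => ?_, ?_⟩
  · refine ⟨σ (f x), ⟨Submodule.mem_map_of_mem ⟨x, rfl⟩, hfσ x⟩, ?_⟩
    rintro _ ⟨⟨_, ⟨z, rfl⟩, rfl⟩, hz⟩
    exact huniq x z hz
  · refine ⟨σ (f w), ⟨⟨Submodule.mem_map_of_mem ⟨w, rfl⟩, hσW _ (h w hw)⟩, hfσ w⟩, ?_⟩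
    rintro _ ⟨⟨⟨_, ⟨z, rfl⟩, rfl⟩, -⟩, hz⟩
    exact huniq w z hz
  · have : (W ⊔ LinearMap.range f).map (σ : V →ₗ[K] V) =
        W ⊔ (LinearMap.range f).map (σ : V →ₗ[K] V) := by
      rw [Submodule.map_sup, hσ]
    exact (Submodule.Quotient.equiv _ _ σ this).rank_eq.symm

end InvariantSubspace

section Transversal

variable {K V : Type*} [Field K] [AddCommGroup V] [Module K V] {W C T : Submodule K V}
  {f φ : V →ₗ[K] V}

theorem exists_eq_map_add_of_sup_eq (hCR : C ≤ LinearMap.range f)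
    (hWCR : W ⊔ C = W ⊔ LinearMap.range f) (hrange : LinearMap.range f ⊓ W = W.map f) (x : V) :
    ∃ w ∈ W, ∃ c ∈ C, f x = f w + c := by
  obtain ⟨w', hw', c, hc, hwc⟩ :=
    Submodule.mem_sup.mp (hWCR ▸ Submodule.mem_sup_right ⟨x, rfl⟩ : f x ∈ W ⊔ C)
  have : w' ∈ LinearMap.range f ⊓ W := ⟨eq_sub_of_add_eq hwc ▸ sub_mem ⟨x, rfl⟩ (hCR hc), hw'⟩
  rw [hrange] at this
  obtain ⟨w, hw, rfl⟩ := this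
  exact ⟨w, hw, c, hc, hwc.symm⟩

theorem ker_domRestrict_sup_eq_bot (h : ∀ x ∈ W, f x ∈ W) (hWC : Disjoint W C)
    (u₀ : W ≃ₗ[K] W) (hφW : ∀ w : W, φ w = u₀ w) (hfφC : ∀ c ∈ C, f (φ c) = c) :
    LinearMap.ker (φ.domRestrict (W ⊔ C)) = ⊥ := by
  rw [LinearMap.ker_eq_bot']
  rintro ⟨x, hx⟩ hφx
  obtain ⟨w, hw, c, hc, rfl⟩ := Submodule.mem_sup.mp hx
  replace hφx : φ w + φ c = 0 := by simpa using hφx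
  obtain rfl : c = 0 := by
    refine Submodule.disjoint_def.mp hWC c ?_ hc
    have := congrArg f hφx
    rw [map_add, hfφC c hc, map_zero] at this
    rw [eq_neg_of_add_eq_zero_right this, hφW ⟨w, hw⟩]
    exact neg_mem (h _ (u₀ _).2)
  have : u₀ ⟨w, hw⟩ = 0 := Subtype.ext (by simpa [hφW ⟨w, hw⟩] using hφx)
  simpa using this

theorem map_sup_eq_sup_of_transversal (u₀ : W ≃ₗ[K] W) (hφW : ∀ w : W, φ w = u₀ w)
    (hφC : ∀ c ∈ C, φ c ∈ T ∧ f (φ c) = c) (hdecomp : ∀ x, ∃ w ∈ W, ∃ c ∈ C, f x = f w + c)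
    (hT : ∀ x, ∃! y, y ∈ T ∧ f y = f x) (hTW : ∀ w ∈ W, ∃! y, y ∈ T ⊓ W ∧ f y = f w) :
    (W ⊔ C).map φ = W ⊔ T := by
  have hφWW : W.map φ = W := by
    refine le_antisymm ?_ fun w hw => ⟨u₀.symm ⟨w, hw⟩, (u₀.symm _).2, by simp [hφW]⟩
    rintro _ ⟨w, hw, rfl⟩
    simp [hφW ⟨w, hw⟩]
  rw [Submodule.map_sup, hφWW]
  refine le_antisymm (sup_le_sup_left (Submodule.map_le_iff_le_comap.mpr
    fun c hc => (hφC c hc).1) _) (sup_le le_sup_left fun t ht => ?_)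
  obtain ⟨w, hw, c, hc, hft⟩ := hdecomp t
  obtain ⟨y, ⟨⟨hyT, hyW⟩, hfy⟩, -⟩ := hTW w hw
  have : t = y + φ c := (hT t).unique ⟨ht, rfl⟩
    ⟨add_mem hyT (hφC c hc).1, by rw [map_add, hfy, (hφC c hc).2, hft]⟩
  rw [this]
  exact add_mem (Submodule.mem_sup_left hyW) (Submodule.mem_sup_right (Submodule.mem_map_of_mem hc))

theorem exists_linearEquiv_of_transversal (h : ∀ x ∈ W, f x ∈ W) (u₀ : W ≃ₗ[K] W)
    (hreg : f.restrict h ∘ₗ u₀.toLinearMap ∘ₗ f.restrict h = f.restrict h)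
    (hrange : LinearMap.range f ⊓ W = W.map f)
    (hT : ∀ x, ∃! y, y ∈ T ∧ f y = f x) (hTW : ∀ w ∈ W, ∃! y, y ∈ T ⊓ W ∧ f y = f w)
    (hrank : Module.rank K (V ⧸ (W ⊔ T)) = Module.rank K (V ⧸ (W ⊔ LinearMap.range f))) :
    ∃ σ : V ≃ₗ[K] V, (∀ w : W, σ w = u₀ w) ∧ f ∘ₗ σ.toLinearMap ∘ₗ f = f := by
  obtain ⟨G, hG⟩ := LinearMap.exists_section_of_existsUnique f hT
  obtain ⟨C, hCR, hWC, hWCR⟩ := exists_le_disjoint_and_sup_eq W (LinearMap.range f)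
  obtain ⟨φ, hφW, hφC⟩ := Submodule.exists_linearMap_eq_of_disjoint hWC
    (W.subtype ∘ₗ u₀.toLinearMap) (G ∘ₗ Submodule.inclusion hCR)
  replace hφW : ∀ w : W, φ w = u₀ w := hφW
  replace hφC : ∀ c ∈ C, φ c ∈ T ∧ f (φ c) = c := fun c hc => hφC ⟨c, hc⟩ ▸ hG ⟨c, hCR hc⟩
  have hfφW : ∀ w ∈ W, f (φ (f w)) = f w := fun w hw =>
    (congrArg f (hφW ⟨f w, h w hw⟩)).trans congr(Subtype.val ($hreg ⟨w, hw⟩))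
  have hdecomp := exists_eq_map_add_of_sup_eq hCR hWCR hrange
  obtain ⟨σ, hσ⟩ := Submodule.exists_linearEquiv_eqOn_of_rank_quotient_eq φ
    (ker_domRestrict_sup_eq_bot h hWC u₀ hφW fun c hc => (hφC c hc).2)
    (by rw [map_sup_eq_sup_of_transversal u₀ hφW hφC hdecomp hT hTW, hWCR, hrank])
  refine ⟨σ, fun w => (hσ w (Submodule.mem_sup_left w.2)).trans (hφW w), ?_⟩
  ext x
  obtain ⟨w, hw, c, hc, hx⟩ := hdecomp x
  have hxWC : f x ∈ W ⊔ C :=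
    hx ▸ add_mem (Submodule.mem_sup_left (h w hw)) (Submodule.mem_sup_right hc)
  rw [LinearMap.comp_apply, LinearMap.comp_apply, LinearEquiv.coe_coe, hσ _ hxWC, hx, map_add,
    map_add, hfφW w hw, (hφC c hc).2]

end Transversal

section LSemi

variable {K V : Type*} [Field K] [AddCommGroup V] [Module K V] {W : Submodule K V}
  {S : Set (W →ₗ[K] W)} {f : V →ₗ[K] V}

theorem unitRegularElem_restrict_of_lSemi (h : ∀ x ∈ W, f x ∈ W)
    (hreg : LUnitRegularElem (LSemi W S) f) : LUnitRegularElem S (f.restrict h) := by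
  obtain ⟨u, ⟨⟨hu, huS⟩, v, ⟨hv, hvS⟩, huv, hvu⟩, hfuf⟩ := hreg
  refine ⟨u.restrict hu, ⟨huS, v.restrict hv, hvS, ?_, ?_⟩, ?_⟩ <;> ext x
  · exact congr($huv x)
  · exact congr($hvu x)
  · exact congr($hfuf x)

theorem exists_linearEquiv_of_unitRegularElem_lSemi (hreg : LUnitRegularElem (LSemi W S) f) :
    ∃ σ : V ≃ₗ[K] V, W.map (σ : V →ₗ[K] V) = W ∧ f ∘ₗ σ.toLinearMap ∘ₗ f = f := by
  obtain ⟨u, ⟨⟨hu, -⟩, v, ⟨hv, -⟩, huv, hvu⟩, hfuf⟩ := hreg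
  refine ⟨.ofLinearMap u v huv hvu, le_antisymm ?_ fun x hx => ⟨v x, hv x hx, congr($huv x)⟩, hfuf⟩
  rintro _ ⟨x, hx, rfl⟩
  exact hu x hx

theorem unitRegularElem_lSemi_of_linearEquiv (σ : V ≃ₗ[K] V) (u₀ : W ≃ₗ[K] W)
    (hu₀ : u₀.toLinearMap ∈ S) (hu₀' : u₀.symm.toLinearMap ∈ S) (hσ : ∀ w : W, σ w = u₀ w)
    (hfσf : f ∘ₗ σ.toLinearMap ∘ₗ f = f) : LUnitRegularElem (LSemi W S) f := by
  have hσ' : ∀ w : W, σ.symm w = u₀.symm w := fun w =>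
    σ.symm_apply_eq.mpr (by rw [hσ, LinearEquiv.apply_symm_apply])
  have hσW : ∀ x ∈ W, σ x ∈ W := fun x hx => hσ ⟨x, hx⟩ ▸ (u₀ _).2
  have hσW' : ∀ x ∈ W, σ.symm x ∈ W := fun x hx => hσ' ⟨x, hx⟩ ▸ (u₀.symm _).2
  refine ⟨σ, ⟨⟨hσW, ?_⟩, σ.symm, ⟨hσW', ?_⟩, ?_, ?_⟩, hfσf⟩
  · convert hu₀ using 1
    ext w
    exact hσ w
  · convert hu₀' using 1
    ext w
    exact hσ' w
  · ext x
    simp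
  · ext x
    simp

end LSemi

theorem stmt13_general {K V : Type*} [Field K] [AddCommGroup V] [Module K V]
    (W : Submodule K V) (S : Set (W →ₗ[K] W))
    (f : V →ₗ[K] V) (h : ∀ x ∈ W, f x ∈ W) :
    LUnitRegularElem (LSemi W S) f ↔
      (LUnitRegularElem S (f.restrict h) ∧
       LinearMap.range f ⊓ W = (LinearMap.range (f.restrict h)).map W.subtype ∧
       ∃ T : Submodule K V,
         (∀ v : V, ∃! u, u ∈ T ∧ f u = f v) ∧
         (∀ w ∈ W, ∃! u, u ∈ T ⊓ W ∧ f u = f w) ∧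
         Module.rank K (V ⧸ (W ⊔ T)) =
           Module.rank K (V ⧸ (W ⊔ LinearMap.range f))) := by
  rw [map_subtype_range_restrict h]
  constructor
  · intro hreg
    obtain ⟨σ, hσW, hfσf⟩ := exists_linearEquiv_of_unitRegularElem_lSemi hreg
    exact ⟨unitRegularElem_restrict_of_lSemi h hreg,
      range_inf_eq_map_of_comp_comp_eq h (fun x hx => hσW ▸ Submodule.mem_map_of_mem hx) hfσf,
      exists_transversal_of_comp_comp_eq h σ hσW hfσf⟩
  · rintro ⟨⟨u₀, ⟨hu₀, v₀, hv₀, hu₀v₀, hv₀u₀⟩, hreg⟩, hrange, T, hT, hTW, hrank⟩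
    let e : W ≃ₗ[K] W := .ofLinearMap u₀ v₀ hu₀v₀ hv₀u₀
    obtain ⟨σ, hσ, hfσf⟩ := exists_linearEquiv_of_transversal h e hreg hrange hT hTW hrank
    exact unitRegularElem_lSemi_of_linearEquiv σ e hu₀ hv₀ hσ hfσf

theorem stmt13 {K V : Type*} [Field K] [AddCommGroup V] [Module K V]
    (W : Submodule K V) (S : Set (W →ₗ[K] W)) (hS : LIsSubsemigroup S)
    (hid : LinearMap.id ∈ S)
    (f : V →ₗ[K] V) (h : ∀ x ∈ W, f x ∈ W) (hf : f.restrict h ∈ S) :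
    LUnitRegularElem (LSemi W S) f ↔
      (LUnitRegularElem S (f.restrict h) ∧
       LinearMap.range f ⊓ W = (LinearMap.range (f.restrict h)).map W.subtype ∧
       ∃ T : Submodule K V,
         (∀ v : V, ∃! u, u ∈ T ∧ f u = f v) ∧
         (∀ w ∈ W, ∃! u, u ∈ T ⊓ W ∧ f u = f w) ∧
         Module.rank K (V ⧸ (W ⊔ T)) =
           Module.rank K (V ⧸ (W ⊔ LinearMap.range f))) :=
  stmt13_general W S f h
end

section
/- Let V be a vector space over a field, W a subspace, and S(W) a subsemigroup of L(W) with I_W ∈ S(W). If S(W) is a subgroup of Aut(W) and dim(V/W) is finite, then L_{S(W)}(V) is a unit-regular monoid. -/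
/-!
Let `f ∈ L_{S(W)}(V)`. Since `f` restricts to an automorphism of `W`, its kernel `N` meets `W`
trivially and its range `R` contains `W`; so `W` lies in a complement `C` of `N`, and `f` maps `C`
isomorphically onto `R`. On the finite-dimensional quotient `V/W`, the map induced by `f` has
kernel `≅ N` and cokernel `≅ V/R`, so rank–nullity gives `dim N = dim (V/R)`. Hence `f|_C` extends,
by an isomorphism from `N` onto a complement of `R`, to an automorphism `v` of `V`, and
`u = v⁻¹` satisfies `f u f = f`. As `v` agrees with `f` on `W`, `v|_W = f|_W ∈ S(W)` and
`u|_W = (f|_W)⁻¹ ∈ S(W)`.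
-/

open Set

open LinearMap Submodule Function

namespace LinearMap

variable {K V V₂ : Type*} [DivisionRing K] [AddCommGroup V] [Module K V]
  [AddCommGroup V₂] [Module K V₂]

theorem exists_linearEquiv_eqOn_of_isCompl_ker {f : V →ₗ[K] V₂} {C : Submodule K V}
    (hC : IsCompl C (ker f)) (e : ker f ≃ₗ[K] V₂ ⧸ range f) :
    ∃ v : V ≃ₗ[K] V₂, ∀ c ∈ C, v c = f c := by
  obtain ⟨D, hD⟩ := (range f).exists_isCompl
  let eC : C ≃ₗ[K] range f :=
    (quotientEquivOfIsCompl _ _ hC.symm).symm.trans f.quotKerEquivRange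
  let eN : ker f ≃ₗ[K] D := e.trans (quotientEquivOfIsCompl _ _ hD)
  refine ⟨(prodEquivOfIsCompl C (ker f) hC).symm.trans
    ((eC.prodCongr eN).trans (prodEquivOfIsCompl _ _ hD)), fun c hc => ?_⟩
  have hsplit : (prodEquivOfIsCompl C (ker f) hC).symm c = (⟨c, hc⟩, 0) :=
    prodEquivOfIsCompl_symm_apply_left _ _ hC ⟨c, hc⟩
  simp [hsplit, eC]

theorem comp_symm_comp_self_of_eqOn {f : V →ₗ[K] V₂} {C : Submodule K V}
    (hC : Codisjoint C (ker f)) {v : V ≃ₗ[K] V₂} (hv : ∀ c ∈ C, v c = f c) :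
    f ∘ₗ v.symm.toLinearMap ∘ₗ f = f := by
  ext x
  obtain ⟨c, hc, n, hn, rfl⟩ := mem_sup.mp (hC.eq_top ▸ mem_top : x ∈ C ⊔ ker f)
  have hfn : f n = 0 := hn
  simp [hfn, ← hv c hc]

section Invariant

variable {f : V →ₗ[K] V} {W : Submodule K V} (hW : ∀ x ∈ W, f x ∈ W)
include hW

theorem le_range_of_surjective_restrict (hf : Surjective (f.restrict hW)) : W ≤ range f := by
  intro w hw
  obtain ⟨w', hw'⟩ := hf ⟨w, hw⟩
  exact ⟨w', congrArg Subtype.val hw'⟩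

theorem comap_eq_sup_ker_of_surjective_restrict (hf : Surjective (f.restrict hW)) :
    comap f W = W ⊔ ker f := by
  refine le_antisymm (fun x hx => ?_) (sup_le hW fun x hx => ?_)
  · obtain ⟨w, hw⟩ := hf ⟨f x, hx⟩
    have hfw : f w = f x := congrArg Subtype.val hw
    exact mem_sup.mpr ⟨w, w.2, x - w, by simp [hfw], by abel⟩
  · simp [mem_ker.mp hx]

theorem ker_mapQ_eq_map_ker_of_surjective_restrict (hf : Surjective (f.restrict hW)) :
    ker (W.mapQ W f hW) = (ker f).map W.mkQ := by
  rw [ker_mapQ, comap_eq_sup_ker_of_surjective_restrict hW hf, Submodule.map_sup, mkQ_map_self,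
    bot_sup_eq]

theorem nonempty_linearEquiv_ker_quotient_range [FiniteDimensional K (V ⧸ W)]
    (hf : Bijective (f.restrict hW)) : Nonempty (ker f ≃ₗ[K] V ⧸ range f) := by
  set fbar := W.mapQ W f hW
  have hinj : Injective (W.mkQ ∘ₗ (ker f).subtype) := by
    rw [← ker_eq_bot, ker_comp, ker_mkQ, ← disjoint_iff_comap_eq_bot]
    exact ((injective_restrict_iff hW).mp hf.1).symm
  let eKer : ker f ≃ₗ[K] ker fbar := (LinearEquiv.ofInjective _ hinj).trans
    (LinearEquiv.ofEq _ _ (by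
      rw [range_comp, range_subtype, ker_mapQ_eq_map_ker_of_surjective_restrict hW hf.2]))
  let eCoker : ((V ⧸ W) ⧸ range fbar) ≃ₗ[K] V ⧸ range f :=
    (quotEquivOfEq _ _ (range_mapQ W W f hW)).trans
      (quotientQuotientEquivQuotient W (range f) (le_range_of_surjective_restrict hW hf.2))
  have := Module.Finite.equiv eKer.symm
  have := Module.Finite.equiv eCoker
  refine ⟨LinearEquiv.ofFinrankEq _ _ ?_⟩
  have hrank := fbar.finrank_range_add_finrank_ker
  have hquot := (range fbar).finrank_quotient_add_finrank
  rw [eKer.finrank_eq, ← eCoker.finrank_eq]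
  omega

theorem exists_restrict_symm_eq_of_eqOn {v : V ≃ₗ[K] V} (hv : ∀ x ∈ W, v x = f x)
    {b : W →ₗ[K] W} (hb : f.restrict hW ∘ₗ b = LinearMap.id) :
    ∃ h : ∀ x ∈ W, v.symm x ∈ W, v.symm.toLinearMap.restrict h = b := by
  have hsymm : ∀ x : W, v.symm x = b x := fun x => by
    rw [v.symm_apply_eq, hv _ (b x).2]
    exact congrArg Subtype.val (LinearMap.congr_fun hb x).symm
  exact ⟨fun x hx => hsymm ⟨x, hx⟩ ▸ (b _).2, LinearMap.ext fun x => Subtype.ext (hsymm x)⟩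

end Invariant

end LinearMap

theorem stmt14_general {K V : Type*} [Field K] [AddCommGroup V] [Module K V]
    (W : Submodule K V) (S : Set (W →ₗ[K] W))
    (hgrp : LIsSubgroupOfAut S) (hfin : Module.Finite K (V ⧸ W)) :
    LIsUnitRegularOn (LSemi W S) := by
  obtain ⟨-, hbij, -, hinv⟩ := hgrp
  rintro f ⟨hW, hfS⟩
  have hf := hbij _ hfS
  obtain ⟨b, hbS, hfb, -⟩ := hinv _ hfS
  obtain ⟨C, hWC, hC⟩ := ((injective_restrict_iff hW).mp hf.1).exists_isCompl
  obtain ⟨e⟩ := nonempty_linearEquiv_ker_quotient_range hW hf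
  obtain ⟨v, hv⟩ := exists_linearEquiv_eqOn_of_isCompl_ker hC e
  have hvW : ∀ x ∈ W, v x = f x := fun x hx => hv x (hWC hx)
  obtain ⟨hWu, hub⟩ := exists_restrict_symm_eq_of_eqOn hW hvW hfb
  have hWv : ∀ x ∈ W, v x ∈ W := fun x hx => hvW x hx ▸ hW x hx
  have hvf : v.toLinearMap.restrict hWv = f.restrict hW :=
    LinearMap.ext fun x => Subtype.ext (hvW x x.2)
  exact ⟨v.symm, ⟨⟨hWu, hub ▸ hbS⟩, v, ⟨hWv, hvf ▸ hfS⟩, v.symm_comp, v.comp_symm⟩,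
    comp_symm_comp_self_of_eqOn hC.codisjoint hv⟩

theorem stmt14 {K V : Type*} [Field K] [AddCommGroup V] [Module K V]
    (W : Submodule K V) (S : Set (W →ₗ[K] W)) (hid : LinearMap.id ∈ S)
    (hgrp : LIsSubgroupOfAut S) (hfin : Module.Finite K (V ⧸ W)) :
    LIsUnitRegularOn (LSemi W S) :=
  stmt14_general W S hgrp hfin
end

section
/- Let V be a vector space over a field, W a subspace, and S(W) a subsemigroup of L(W). Then L_{S(W)}(V) is an inverse semigroup if and only if S(W) is an inverse semigroup and either W = V or dim(V) = 1. -/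
open Set

/-!
Restricting to `W`, and extending along a retraction `V → W`, transport inverses between
`L_{S(W)}(V)` and `S(W)`: so `S(W)` is inverse when `L_{S(W)}(V)` is, and conversely when `W = V`.
If `W ≠ V`, an inverse `t ≠ 0` in `S(W)` has one extension per retraction, all inverse to the same
element, so `S(W) = {0}`. Then every map killing `W` lies in `L_{S(W)}(V)`, and any proper nonzero
subspace `W₁ ⊇ W` yields two rank-one inverses of one such map; such a `W₁` exists unless `W = 0`
and `dim V = 1`, where `L_{S(W)}(V) = L(V)` is a division ring.
-/

def LIsInverseOf {R M : Type*} [Semiring R] [AddCommMonoid M] [Module R M]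
    (a b : M →ₗ[R] M) : Prop :=
  a ∘ₗ b ∘ₗ a = a ∧ b ∘ₗ a ∘ₗ b = b

theorem eq_inv_of_mul_mul_eq {G₀ : Type*} [GroupWithZero G₀] {a b : G₀}
    (hab : a * b * a = a) (hba : b * a * b = b) : b = a⁻¹ := by
  rcases eq_or_ne a 0 with rfl | ha
  · simpa using hba.symm
  · exact eq_inv_of_mul_eq_one_left (mul_left_cancel₀ ha (by rw [← mul_assoc, hab, mul_one]))

section Semiring

variable {R M : Type*} [Semiring R] [AddCommMonoid M] [Module R M] {p : Submodule R M}

theorem LIsInverseOf.restrict {a b : M →ₗ[R] M} (h : LIsInverseOf a b)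
    (ha : ∀ x ∈ p, a x ∈ p) (hb : ∀ x ∈ p, b x ∈ p) :
    LIsInverseOf (a.restrict ha) (b.restrict hb) :=
  ⟨LinearMap.ext fun x => Subtype.ext (LinearMap.congr_fun h.1 x),
    LinearMap.ext fun x => Subtype.ext (LinearMap.congr_fun h.2 x)⟩

theorem LIsInverseOf.smulRight {φ : M →ₗ[R] R} {u v : M} (hu : φ u = 1) (hv : φ v = 1) :
    LIsInverseOf (φ.smulRight u) (φ.smulRight v) := by
  have hcomp : ∀ {w w' : M}, φ w' = 1 → φ.smulRight w ∘ₗ φ.smulRight w' = φ.smulRight w := by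
    intro w w' hw'
    ext x
    simp [hw']
  exact ⟨by rw [hcomp hu, hcomp hv], by rw [hcomp hv, hcomp hu]⟩

def extendAlong (q : M →ₗ[R] p) (t : p →ₗ[R] p) : M →ₗ[R] M :=
  p.subtype ∘ₗ t ∘ₗ q

theorem extendAlong_mapsTo (q : M →ₗ[R] p) (t : p →ₗ[R] p) :
    ∀ x ∈ p, extendAlong q t x ∈ p :=
  fun x _ => (t (q x)).2

variable {q q' : M →ₗ[R] p}

theorem restrict_extendAlong (hq : ∀ x : p, q x = x) (t : p →ₗ[R] p) :
    (extendAlong q t).restrict (extendAlong_mapsTo q t) = t := by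
  ext x
  simp [extendAlong, hq]

theorem extendAlong_comp_extendAlong (hq : ∀ x : p, q x = x) (t t' : p →ₗ[R] p) :
    extendAlong q t ∘ₗ extendAlong q' t' = extendAlong q' (t ∘ₗ t') := by
  ext x
  simp [extendAlong, hq]

theorem LIsInverseOf.extendAlong {s t : p →ₗ[R] p} (h : LIsInverseOf s t)
    (hq : ∀ x : p, q x = x) (hq' : ∀ x : p, q' x = x) :
    LIsInverseOf (extendAlong q s) (extendAlong q' t) := by
  constructor
  · rw [extendAlong_comp_extendAlong hq', extendAlong_comp_extendAlong hq, h.1]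
  · rw [extendAlong_comp_extendAlong hq, extendAlong_comp_extendAlong hq', h.2]

end Semiring

section Field

variable {K V : Type*} [Field K] [AddCommGroup V] [Module K V]

theorem LIsInverseOn.unique {T : Set (V →ₗ[K] V)} (hT : LIsInverseOn T) {a b c : V →ₗ[K] V}
    (ha : a ∈ T) (hb : b ∈ T) (hc : c ∈ T) (hab : LIsInverseOf a b) (hac : LIsInverseOf a c) :
    b = c :=
  (hT a ha).unique ⟨hb, hab⟩ ⟨hc, hac⟩

/-- By Schur's lemma `Module.End K V` is a division ring, in which `a⁻¹` is the unique inverse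
of `a`. -/
theorem LIsInverseOn.univ_of_isSimpleModule [IsSimpleModule K V] :
    LIsInverseOn (univ : Set (V →ₗ[K] V)) := by
  classical
  have isInverseOf_iff : ∀ a b : Module.End K V,
      LIsInverseOf a b ↔ a * b * a = a ∧ b * a * b = b := by
    intro a b
    simp only [LIsInverseOf, Module.End.mul_eq_comp, LinearMap.comp_assoc]
  intro a _
  refine ⟨a⁻¹, ⟨trivial, (isInverseOf_iff a a⁻¹).2 ?_⟩, fun b ⟨_, hb⟩ => ?_⟩
  · exact ⟨mul_inv_mul_cancel a, by simpa using mul_inv_mul_cancel a⁻¹⟩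
  · obtain ⟨hab, hba⟩ := (isInverseOf_iff a b).1 hb
    exact eq_inv_of_mul_mul_eq hab hba

theorem isSimpleModule_of_rank_eq_one (h : Module.rank K V = 1) : IsSimpleModule K V :=
  isSimpleModule_iff_finrank_eq_one.2 (Module.rank_eq_one_iff_finrank_eq_one.1 h)

theorem exists_le_ne_bot_ne_top {W : Submodule K V} (hW : W ≠ ⊤) (h : Module.rank K V ≠ 1) :
    ∃ W₁ : Submodule K V, W ≤ W₁ ∧ W₁ ≠ ⊥ ∧ W₁ ≠ ⊤ := by
  rcases eq_or_ne W ⊥ with rfl | hWbot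
  · by_contra! hsimple
    have : Nontrivial (Submodule K V) := ⟨⟨⊥, ⊤, hW⟩⟩
    exact h (Module.rank_eq_one_iff_finrank_eq_one.2 (isSimpleModule_iff_finrank_eq_one.1
      { eq_bot_or_eq_top := fun W₁ => or_iff_not_imp_left.2 (hsimple W₁ bot_le) }))
  · exact ⟨W, le_rfl, hWbot, hW⟩

theorem exists_retraction (W : Submodule K V) : ∃ q : V →ₗ[K] W, ∀ x : W, q x = x := by
  obtain ⟨U, hU⟩ := W.exists_isCompl
  exact ⟨W.projectionOnto U hU, Submodule.projectionOnto_apply_left hU⟩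

theorem exists_retraction_pair {W : Submodule K V} (hW : W ≠ ⊤) (w : W) :
    ∃ q q' : V →ₗ[K] W, (∀ x : W, q x = x) ∧ (∀ x : W, q' x = x) ∧ ∃ x₀, q' x₀ = q x₀ + w := by
  obtain ⟨q, hq⟩ := exists_retraction W
  obtain ⟨v, -, hv⟩ := SetLike.exists_of_lt hW.lt_top
  obtain ⟨φ, hφv, hφW⟩ := W.exists_le_ker_of_notMem hv
  refine ⟨q, q + φ.smulRight w, hq, fun x => ?_, (φ v)⁻¹ • v, ?_⟩
  · simp [hq, LinearMap.mem_ker.1 (hφW x.2)]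
  · simp [hφv]

/-- If `φ` vanishes on `W₁`, `φ x₀ = 1` and `0 ≠ w ∈ W₁`, then `φ.smulRight x₀` and
`φ.smulRight (x₀ + w)` are two inverses of `φ.smulRight x₀`. -/
theorem not_LIsInverseOn_of_forall_le_ker_mem {T : Set (V →ₗ[K] V)} {W₁ : Submodule K V}
    (hbot : W₁ ≠ ⊥) (htop : W₁ ≠ ⊤) (hT : ∀ f : V →ₗ[K] V, W₁ ≤ LinearMap.ker f → f ∈ T) :
    ¬ LIsInverseOn T := by
  intro h
  obtain ⟨v, -, hv⟩ := SetLike.exists_of_lt htop.lt_top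
  obtain ⟨φ, hφv, hφW⟩ := W₁.exists_le_ker_of_notMem hv
  obtain ⟨w, hw, hw0⟩ := W₁.ne_bot_iff.1 hbot
  set x₀ := (φ v)⁻¹ • v
  have hx₀ : φ x₀ = 1 := by simp [x₀, hφv]
  have hx₀w : φ (x₀ + w) = 1 := by simp [hx₀, LinearMap.mem_ker.1 (hφW hw)]
  have hmem : ∀ u, φ.smulRight u ∈ T := fun u =>
    hT _ fun x hx => by simp [LinearMap.mem_ker.1 (hφW hx)]
  have heq := h.unique (hmem x₀) (hmem x₀) (hmem (x₀ + w))
    (.smulRight hx₀ hx₀) (.smulRight hx₀ hx₀w)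
  exact hw0 (by simpa [hx₀] using LinearMap.congr_fun heq x₀)

variable {W : Submodule K V} {S : Set (W →ₗ[K] W)}

theorem extendAlong_mem_LSemi {q : V →ₗ[K] W} (hq : ∀ x : W, q x = x) {t : W →ₗ[K] W}
    (ht : t ∈ S) : extendAlong q t ∈ LSemi W S :=
  ⟨extendAlong_mapsTo q t, by rwa [restrict_extendAlong hq]⟩

theorem mem_LSemi_of_le_ker (h0 : (0 : W →ₗ[K] W) ∈ S) {f : V →ₗ[K] V}
    (hf : W ≤ LinearMap.ker f) : f ∈ LSemi W S := by
  refine ⟨fun x hx => by simp [LinearMap.mem_ker.1 (hf hx)], ?_⟩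
  convert h0
  ext x
  simp [LinearMap.mem_ker.1 (hf x.2)]

theorem LSemi_bot_eq_univ {S : Set ((⊥ : Submodule K V) →ₗ[K] (⊥ : Submodule K V))}
    (hS : S.Nonempty) : LSemi (⊥ : Submodule K V) S = univ := by
  obtain ⟨s, hs⟩ := hS
  refine eq_univ_of_forall fun f => ⟨fun x hx => by simp_all [Submodule.mem_bot], ?_⟩
  rwa [Subsingleton.elim (f.restrict _) s]

theorem LIsInverseOn.of_LSemi (h : LIsInverseOn (LSemi W S)) : LIsInverseOn S := by
  intro s hs
  obtain ⟨q, hq⟩ := exists_retraction W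
  obtain ⟨b, ⟨⟨hbW, hbS⟩, hsb⟩, hb_unique⟩ := h _ (extendAlong_mem_LSemi hq hs)
  have hsb' := LIsInverseOf.restrict hsb (extendAlong_mapsTo q s) hbW
  rw [restrict_extendAlong hq] at hsb'
  refine ⟨b.restrict hbW, ⟨hbS, hsb'⟩, fun t ⟨htS, hst⟩ => ?_⟩
  obtain rfl : extendAlong q t = b :=
    hb_unique _ ⟨extendAlong_mem_LSemi hq htS, LIsInverseOf.extendAlong hst hq hq⟩
  exact (restrict_extendAlong hq t).symm

/-- Two extensions of an inverse `t` of `s` along different retractions are both inverses of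
the extension of `s`; they differ as soon as `t ≠ 0`. -/
theorem LIsInverseOn.eq_zero_of_LSemi (h : LIsInverseOn (LSemi W S)) (hW : W ≠ ⊤)
    {s : W →ₗ[K] W} (hs : s ∈ S) : s = 0 := by
  obtain ⟨t, ⟨htS, hst⟩, -⟩ := h.of_LSemi s hs
  suffices t = 0 by simpa [this] using hst.1.symm
  by_contra! ht
  obtain ⟨w, hw⟩ := DFunLike.ne_iff.1 ht
  obtain ⟨q, q', hq, hq', x₀, hx₀⟩ := exists_retraction_pair hW w
  have heq := h.unique (extendAlong_mem_LSemi hq hs) (extendAlong_mem_LSemi hq htS)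
    (extendAlong_mem_LSemi hq' htS) (.extendAlong hst hq hq) (.extendAlong hst hq hq')
  exact hw (by simpa [extendAlong, hx₀] using LinearMap.congr_fun heq x₀)

theorem extendAlong_restrict_of_top {q : V →ₗ[K] (⊤ : Submodule K V)}
    (hq : ∀ x : (⊤ : Submodule K V), q x = x) (f : V →ₗ[K] V)
    (hf : ∀ x ∈ (⊤ : Submodule K V), f x ∈ (⊤ : Submodule K V)) :
    extendAlong q (f.restrict hf) = f := by
  ext x
  simp [extendAlong, hq ⟨x, trivial⟩]

theorem LIsInverseOn.LSemi_top {S : Set ((⊤ : Submodule K V) →ₗ[K] (⊤ : Submodule K V))}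
    (h : LIsInverseOn S) : LIsInverseOn (LSemi ⊤ S) := by
  obtain ⟨q, hq⟩ := exists_retraction (⊤ : Submodule K V)
  rintro a ⟨ha, haS⟩
  obtain ⟨t, ⟨htS, hat⟩, ht_unique⟩ := h _ haS
  have hat' := LIsInverseOf.extendAlong hat hq hq
  rw [extendAlong_restrict_of_top hq] at hat'
  refine ⟨_, ⟨extendAlong_mem_LSemi hq htS, hat'⟩, fun c ⟨⟨hc, hcS⟩, hac⟩ => ?_⟩
  rw [← extendAlong_restrict_of_top hq c hc,
    ht_unique _ ⟨hcS, LIsInverseOf.restrict hac ha hc⟩]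

end Field

theorem stmt16_general {K V : Type*} [Field K] [AddCommGroup V] [Module K V]
    (W : Submodule K V) (S : Set (W →ₗ[K] W)) (hSne : S.Nonempty) :
    LIsInverseOn (LSemi W S) ↔
      (LIsInverseOn S ∧ (W = ⊤ ∨ Module.rank K V = 1)) := by
  refine ⟨fun h => ⟨h.of_LSemi, ?_⟩, ?_⟩
  · by_contra! ⟨hWtop, hrank⟩
    obtain ⟨s, hs⟩ := hSne
    have h0 : (0 : W →ₗ[K] W) ∈ S := h.eq_zero_of_LSemi hWtop hs ▸ hs
    obtain ⟨W₁, hWW₁, hbot, htop⟩ := exists_le_ne_bot_ne_top hWtop hrank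
    exact not_LIsInverseOn_of_forall_le_ker_mem hbot htop
      (fun f hf => mem_LSemi_of_le_ker h0 (hWW₁.trans hf)) h
  · rintro ⟨hS, rfl | hrank⟩
    · exact hS.LSemi_top
    · have := isSimpleModule_of_rank_eq_one hrank
      rcases eq_bot_or_eq_top W with rfl | rfl
      · rw [LSemi_bot_eq_univ hSne]
        exact .univ_of_isSimpleModule
      · exact hS.LSemi_top

theorem stmt16 {K V : Type*} [Field K] [AddCommGroup V] [Module K V]
    (W : Submodule K V) (S : Set (W →ₗ[K] W)) (hSne : S.Nonempty)
    (hS : LIsSubsemigroup S) :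
    LIsInverseOn (LSemi W S) ↔
      (LIsInverseOn S ∧ (W = ⊤ ∨ Module.rank K V = 1)) :=
  stmt16_general W S hSne
end

section
/- Let V be a vector space over a field. The semigroup L(V) of all linear self-maps of V under composition is an inverse semigroup if and only if dim(V) ≤ 1. -/
open Set

/-! If `dim V ≤ 1`, every endomorphism is a scalar, hence `0` or a unit, and each of these has
exactly one inverse. If `dim V ≥ 2`, two basis vectors give rank-one maps `e`, `n` with
`e² = e`, `e n = n`, `n e = 0` and `n ≠ 0`; then `e` and `e + n` are two distinct inverses
of `e`. -/

theorem IsUnit.existsUnique_inverse {M : Type*} [Monoid M] {a : M} (ha : IsUnit a) :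
    ∃! b, a * b * a = a ∧ b * a * b = b := by
  obtain ⟨u, rfl⟩ := ha
  refine ⟨↑u⁻¹, by simp, fun b hb => ?_⟩
  calc b = ↑u⁻¹ * (↑u * b * ↑u) * ↑u⁻¹ := by simp [mul_assoc]
    _ = ↑u⁻¹ := by rw [hb.1]; simp

theorem existsUnique_inverse_zero {M : Type*} [MulZeroClass M] :
    ∃! b : M, 0 * b * 0 = 0 ∧ b * 0 * b = b :=
  ⟨0, by simp, fun b hb => by simpa using hb.2.symm⟩

theorem IsIdempotentElem.not_existsUnique_inverse {R : Type*} [Ring R] {e n : R}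
    (he : IsIdempotentElem e) (hen : e * n = n) (hne : n * e = 0) (hn : n ≠ 0) :
    ¬∃! b, e * b * e = e ∧ b * e * b = b := by
  rintro ⟨b, -, huniq⟩
  have hself : e = b := huniq e ⟨by rw [he.eq, he.eq], by rw [he.eq, he.eq]⟩
  have hperturbed : e + n = b := huniq (e + n)
    ⟨by rw [mul_add, he.eq, hen, add_mul, he.eq, hne, add_zero],
     by rw [add_mul, he.eq, hne, add_zero, mul_add, he.eq, hen]⟩
  exact hn (by simpa using hperturbed.trans hself.symm)

theorem Module.End.exists_idempotent_of_one_lt_rank {K V : Type*} [Field K] [AddCommGroup V]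
    [Module K V] (h : 1 < Module.rank K V) :
    ∃ e n : Module.End K V, IsIdempotentElem e ∧ e * n = n ∧ n * e = 0 ∧ n ≠ 0 := by
  classical
  let b := Module.Basis.ofVectorSpace K V
  have : Nontrivial (Module.Basis.ofVectorSpaceIndex K V) := by
    rwa [← Cardinal.one_lt_iff_nontrivial, b.mk_eq_rank'']
  obtain ⟨i, j, hij⟩ := exists_pair_ne (Module.Basis.ofVectorSpaceIndex K V)
  refine ⟨(b.coord i).smulRight (b i), (b.coord j).smulRight (b i), ?_, ?_, ?_, ?_⟩
  · ext v; simp [Module.End.mul_eq_comp]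
  · ext v; simp [Module.End.mul_eq_comp]
  · ext v; simp [Module.End.mul_eq_comp, hij.symm]
  · intro h0
    have := LinearMap.congr_fun h0 (b j)
    simp [b.ne_zero i] at this

theorem Module.End.exists_eq_smul_one_of_rank_le_one {K V : Type*} [Field K] [AddCommGroup V]
    [Module K V] (h : Module.rank K V ≤ 1) (a : Module.End K V) : ∃ c : K, a = c • 1 := by
  obtain ⟨v₀, hv₀⟩ := rank_le_one_iff.mp h
  obtain ⟨c, hc⟩ := hv₀ (a v₀)
  refine ⟨c, LinearMap.ext fun v => ?_⟩
  obtain ⟨r, rfl⟩ := hv₀ v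
  rw [map_smul, ← hc, smul_comm]
  rfl

theorem Module.End.eq_zero_or_isUnit_of_rank_le_one {K V : Type*} [Field K] [AddCommGroup V]
    [Module K V] (h : Module.rank K V ≤ 1) (a : Module.End K V) : a = 0 ∨ IsUnit a := by
  obtain ⟨c, rfl⟩ := exists_eq_smul_one_of_rank_le_one h a
  rcases eq_or_ne c 0 with rfl | hc
  · simp
  · right
    simpa [Algebra.algebraMap_eq_smul_one] using
      (isUnit_iff_ne_zero.mpr hc).map (algebraMap K (Module.End K V))

theorem stmt17 {K V : Type*} [Field K] [AddCommGroup V] [Module K V] :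
    (∀ a : V →ₗ[K] V, ∃! b : V →ₗ[K] V, a ∘ₗ b ∘ₗ a = a ∧ b ∘ₗ a ∘ₗ b = b) ↔
      Module.rank K V ≤ 1 := by
  simp only [← Module.End.mul_eq_comp, ← mul_assoc]
  constructor
  · intro h
    by_contra! hr
    obtain ⟨e, n, he, hen, hne, hn⟩ := Module.End.exists_idempotent_of_one_lt_rank hr
    exact he.not_existsUnique_inverse hen hne hn (h e)
  · intro hr a
    obtain rfl | ha := Module.End.eq_zero_or_isUnit_of_rank_le_one hr a
    · exact existsUnique_inverse_zero
    · exact ha.existsUnique_inverse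
end
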